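/- arXiv:1203.6310 — 4 statements merged into one kernel-verified Lean document; each statement's English description precedes it below -/
import Mathlib

section
/- Suppose that ε > 0, that k, r ≥ 2 are integers, and that p = p(n) ≥ n^{-1/k + ε}. Then asymptotically almost surely G_{n,p} has a P_r^k-factor. -/
open Filter

namespace RandomGraphs

/-- The `k`-th power of a graph: two vertices are adjacent iff their distance in `G`
is positive (they are distinct and reachable from each other) and at most `k`. -/
def graphPow {V : Type*} (G : SimpleGraph V) (k : ℕ) : SimpleGraph V where
  Adj u v := u ≠ v ∧ G.Reachable u v ∧ G.dist u v ≤ k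
  symm := by
    constructor
    intro u v h
    exact ⟨h.1.symm, h.2.1.symm, by rw [SimpleGraph.dist_comm]; exact h.2.2⟩
  loopless := by constructor; intro v h; exact h.1 rfl

/-- `H` appears as a (not necessarily induced) subgraph of `G`. -/
def ContainsCopy {V W : Type*} (H : SimpleGraph V) (G : SimpleGraph W) : Prop :=
  ∃ f : V → W, Function.Injective f ∧ ∀ ⦃u v⦄, H.Adj u v → G.Adj (f u) (f v)

/-- All potential edges of a graph on `Fin n`. -/
def edgeCandidates (n : ℕ) : Finset (Sym2 (Fin n)) :=
  Finset.univ.filter (fun e => ¬ e.IsDiag)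

/-- The probability of a given edge set `E` in `G_{n,p}`. -/
noncomputable def edgeSetWeight (n : ℕ) (p : ℝ) (E : Finset (Sym2 (Fin n))) : ℝ :=
  p ^ E.card * (1 - p) ^ ((edgeCandidates n).card - E.card)

open scoped Classical in
/-- The probability that the binomial random graph `G_{n,p}` satisfies the property `P`. -/
noncomputable def prob (n : ℕ) (p : ℝ) (P : SimpleGraph (Fin n) → Prop) : ℝ :=
  ∑ E ∈ (edgeCandidates n).powerset,
    if P (SimpleGraph.fromEdgeSet (↑E)) then edgeSetWeight n p E else 0

end RandomGraphs

open RandomGraphs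


namespace RandomGraphs

/-- `G` (on `Fin n`) has an `H`-factor, where `H` is a graph on `Fin m`: there are
`⌊n/m⌋` pairwise vertex-disjoint copies of `H` in `G`. -/
def HasFactor {m n : ℕ} (H : SimpleGraph (Fin m)) (G : SimpleGraph (Fin n)) : Prop :=
  ∃ f : Fin (n / m) → Fin m → Fin n,
    (∀ i, Function.Injective (f i) ∧ ∀ ⦃u v⦄, H.Adj u v → G.Adj (f i u) (f i v)) ∧
    (∀ i i', i ≠ i' → ∀ u v, f i u ≠ f i' v)

end RandomGraphs

/-!
Put `N = ⌊n/r⌋` and arrange `r N` of the vertices in `r` columns of height `N`. The `N` copies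
of `P_r^k` are built column by column: the vertex of a copy in column `i` must be adjacent to its
vertices in the (at most `k`) columns `i - k, …, i - 1`. The edges between column `i` and the
earlier columns are independent of everything exposed so far, so extending all copies by column
`i` is a perfect matching problem in a random bipartite graph on `N + N` vertices in which each
pair is present independently with probability at least `p^k`. By Hall's theorem a failure is
witnessed by sets `S`, `T` of rows with `|T| = |S| - 1` and no pair of `S × Tᶜ` present; a union
bound over these bounds the failure probability by `N³ exp(-p^k N / 2)`, which is `o(1/r)`
because `p^k N ≥ n^{kε} / (2r)`.
-/

open Finset Function

theorem Nat.choose_le_pow_of_min_le {N a b : ℕ} (hN : 0 < N) (h : min a (N - a) ≤ b) :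
    N.choose a ≤ N ^ b := by
  obtain hab | hab := min_le_iff.1 h
  · exact (Nat.choose_le_pow N a).trans (Nat.pow_le_pow_right hN hab)
  · rcases le_or_gt a N with haN | haN
    · rw [← Nat.choose_symm haN]
      exact (Nat.choose_le_pow N _).trans (Nat.pow_le_pow_right hN hab)
    · simp [Nat.choose_eq_zero_of_lt haN]

theorem Finset.exists_card_add_one_eq_of_not_exists_injective {ι κ : Type*} [Fintype ι]
    [Fintype κ] [DecidableEq κ] (t : ι → Finset κ)
    (hcard : Fintype.card ι ≤ Fintype.card κ + 1)
    (h : ¬ ∃ f : ι → κ, Injective f ∧ ∀ i, f i ∈ t i) :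
    ∃ s : Finset ι, ∃ T : Finset κ, T.card + 1 = s.card ∧ ∀ i ∈ s, t i ⊆ T := by
  rw [← all_card_le_biUnion_card_iff_exists_injective] at h
  push Not at h
  obtain ⟨s, hs⟩ := h
  have hs' : s.card - 1 ≤ (univ : Finset κ).card := by
    have := card_le_univ s
    rw [card_univ]
    omega
  obtain ⟨T, hsT, -, hT⟩ :=
    exists_subsuperset_card_eq (subset_univ (s.biUnion t)) (Nat.le_sub_one_of_lt hs) hs'
  exact ⟨s, T, by omega, fun i hi => (subset_biUnion_of_mem t hi).trans hsT⟩

theorem Nat.exists_lt_and_not_succ_of_not {P : ℕ → Prop} {r : ℕ} (h0 : P 0) (hr : ¬ P r) :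
    ∃ i < r, P i ∧ ¬ P (i + 1) := by
  induction r with
  | zero => exact absurd h0 hr
  | succ r ih =>
    by_cases hPr : P r
    · exact ⟨r, Nat.lt_succ_self r, hPr, hr⟩
    · obtain ⟨i, hi, h⟩ := ih hPr
      exact ⟨i, by omega, h⟩

theorem Nat.le_two_mul_mul_div_of_le {n r : ℕ} (hr : 0 < r) (hn : r ≤ n) :
    n ≤ 2 * (r * (n / r)) := by
  have h1 := Nat.div_add_mod n r
  have h2 := Nat.mod_lt n hr
  have h3 : r ≤ r * (n / r) := Nat.le_mul_of_pos_right r (Nat.div_pos hn hr)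
  omega

namespace RandomGraphs

section SubsetProb

variable {α : Type*}

noncomputable def subsetWeight (p : ℝ) (A E : Finset α) : ℝ :=
  p ^ E.card * (1 - p) ^ (A.card - E.card)

open scoped Classical in
noncomputable def subsetProb (p : ℝ) (A : Finset α) (Q : Finset α → Prop) : ℝ :=
  ∑ E ∈ A.powerset, if Q E then subsetWeight p A E else 0

lemma prob_eq_subsetProb (n : ℕ) (p : ℝ) (P : SimpleGraph (Fin n) → Prop) :
    prob n p P = subsetProb p (edgeCandidates n) (fun E => P (SimpleGraph.fromEdgeSet E)) :=
  rfl

lemma subsetProb_eq_sum_ite (p : ℝ) (A : Finset α) (Q : Finset α → Prop) [DecidablePred Q] :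
    subsetProb p A Q = ∑ E ∈ A.powerset, if Q E then subsetWeight p A E else 0 := by
  unfold subsetProb
  congr!

lemma subsetWeight_nonneg {p : ℝ} (hp0 : 0 ≤ p) (hp1 : p ≤ 1) (A E : Finset α) :
    0 ≤ subsetWeight p A E :=
  mul_nonneg (pow_nonneg hp0 _) (pow_nonneg (sub_nonneg.2 hp1) _)

lemma subsetWeight_self (p : ℝ) (A : Finset α) : subsetWeight p A A = p ^ A.card := by
  simp [subsetWeight]

lemma sum_subsetWeight (p : ℝ) (A : Finset α) : ∑ E ∈ A.powerset, subsetWeight p A E = 1 := by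
  simp only [subsetWeight, sum_pow_mul_eq_add_pow, add_sub_cancel, one_pow]

lemma subsetProb_mono {p : ℝ} (hp0 : 0 ≤ p) (hp1 : p ≤ 1) (A : Finset α)
    {Q Q' : Finset α → Prop} (h : ∀ E ⊆ A, Q E → Q' E) :
    subsetProb p A Q ≤ subsetProb p A Q' := by
  classical
  rw [subsetProb_eq_sum_ite, subsetProb_eq_sum_ite]
  refine sum_le_sum fun E hE => ?_
  split_ifs with hQ hQ'
  · exact le_rfl
  · exact absurd (h E (mem_powerset.1 hE) hQ) hQ'
  · exact subsetWeight_nonneg hp0 hp1 A E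
  · exact le_rfl

lemma subsetProb_le_one {p : ℝ} (hp0 : 0 ≤ p) (hp1 : p ≤ 1) (A : Finset α)
    (Q : Finset α → Prop) : subsetProb p A Q ≤ 1 := by
  classical
  calc subsetProb p A Q ≤ subsetProb p A (fun _ => True) :=
        subsetProb_mono hp0 hp1 A fun _ _ _ => trivial
    _ = 1 := by simp only [subsetProb_eq_sum_ite, if_true, sum_subsetWeight]

lemma subsetProb_eq_zero (p : ℝ) (A : Finset α) {Q : Finset α → Prop}
    (h : ∀ E ⊆ A, ¬ Q E) : subsetProb p A Q = 0 := by
  classical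
  rw [subsetProb_eq_sum_ite]
  exact sum_eq_zero fun E hE => if_neg (h E (mem_powerset.1 hE))

lemma subsetProb_add_subsetProb_not (p : ℝ) (A : Finset α) (Q : Finset α → Prop) :
    subsetProb p A Q + subsetProb p A (fun E => ¬ Q E) = 1 := by
  classical
  rw [subsetProb_eq_sum_ite, subsetProb_eq_sum_ite, ← sum_add_distrib, ← sum_subsetWeight p A]
  exact sum_congr rfl fun E _ => by by_cases hQ : Q E <;> simp [hQ]

lemma subsetProb_exists_le_sum {ι : Type*} {p : ℝ} (hp0 : 0 ≤ p) (hp1 : p ≤ 1) (A : Finset α)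
    (s : Finset ι) (Q : ι → Finset α → Prop) :
    subsetProb p A (fun E => ∃ i ∈ s, Q i E) ≤ ∑ i ∈ s, subsetProb p A (Q i) := by
  classical
  simp only [subsetProb_eq_sum_ite]
  rw [sum_comm]
  refine sum_le_sum fun E _ => ?_
  have hnonneg : ∀ i ∈ s, 0 ≤ if Q i E then subsetWeight p A E else 0 := fun i _ => by
    split_ifs
    exacts [subsetWeight_nonneg hp0 hp1 A E, le_rfl]
  split_ifs with h
  · obtain ⟨i, hi, hQ⟩ := h
    calc subsetWeight p A E = if Q i E then subsetWeight p A E else 0 := (if_pos hQ).symm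
      _ ≤ _ := single_le_sum hnonneg hi
  · exact sum_nonneg hnonneg

variable [DecidableEq α]

lemma sum_powerset_eq_sum_powerset_sum_powerset_sdiff {M : Type*} [AddCommMonoid M]
    {A S : Finset α} (hA : A ⊆ S) (f : Finset α → M) :
    ∑ E ∈ S.powerset, f E = ∑ EA ∈ A.powerset, ∑ EB ∈ (S \ A).powerset, f (EA ∪ EB) := by
  rw [← sum_product' (f := fun EA EB => f (EA ∪ EB))]
  refine sum_nbij' (fun E => (E ∩ A, E \ A)) (fun q => q.1 ∪ q.2) ?_ ?_ ?_ ?_ ?_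
  · intro E hE
    simp only [mem_powerset, mem_product] at hE ⊢
    exact ⟨inter_subset_right, sdiff_subset_sdiff hE le_rfl⟩
  · intro q hq
    simp only [mem_powerset, mem_product] at hq ⊢
    exact union_subset (hq.1.trans hA) (hq.2.trans sdiff_subset)
  · intro E _
    exact sup_inf_sdiff E A
  · rintro ⟨EA, EB⟩ hq
    simp only [mem_powerset, mem_product, subset_sdiff] at hq
    obtain ⟨hEA, -, hEB⟩ := hq
    simp only [union_inter_distrib_right, inter_eq_left.2 hEA, disjoint_iff_inter_eq_empty.1 hEB,
      union_empty, union_sdiff_distrib, sdiff_eq_empty_iff_subset.2 hEA,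
      sdiff_eq_self_of_disjoint hEB, empty_union]
  · intro E _
    exact congrArg f (sup_inf_sdiff E A).symm

lemma subsetWeight_union (p : ℝ) {A B EA EB : Finset α} (hAB : Disjoint A B) (hEA : EA ⊆ A)
    (hEB : EB ⊆ B) :
    subsetWeight p (A ∪ B) (EA ∪ EB) = subsetWeight p A EA * subsetWeight p B EB := by
  have hA := card_le_card hEA
  have hB := card_le_card hEB
  rw [subsetWeight, subsetWeight, subsetWeight, card_union_of_disjoint (hAB.mono hEA hEB),
    card_union_of_disjoint hAB,
    show A.card + B.card - (EA.card + EB.card) = (A.card - EA.card) + (B.card - EB.card) by omega,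
    pow_add, pow_add]
  ring

lemma subsetProb_eq_sum_mul_subsetProb_sdiff (p : ℝ) {A S : Finset α} (hA : A ⊆ S)
    (Q : Finset α → Prop) :
    subsetProb p S Q = ∑ EA ∈ A.powerset,
      subsetWeight p A EA * subsetProb p (S \ A) (fun EB => Q (EA ∪ EB)) := by
  classical
  simp only [subsetProb_eq_sum_ite, mul_sum]
  rw [sum_powerset_eq_sum_powerset_sum_powerset_sdiff hA]
  refine sum_congr rfl fun EA hEA => sum_congr rfl fun EB hEB => ?_
  have hw := subsetWeight_union p disjoint_sdiff (mem_powerset.1 hEA) (mem_powerset.1 hEB)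
  rw [union_sdiff_of_subset hA] at hw
  rw [mul_ite, mul_zero, hw]

lemma subsetProb_le_of_forall_sdiff_le {p : ℝ} (hp0 : 0 ≤ p) (hp1 : p ≤ 1) {A S : Finset α}
    (hA : A ⊆ S) {Q : Finset α → Prop} {δ : ℝ}
    (h : ∀ EA ⊆ A, subsetProb p (S \ A) (fun EB => Q (EA ∪ EB)) ≤ δ) :
    subsetProb p S Q ≤ δ := by
  rw [subsetProb_eq_sum_mul_subsetProb_sdiff p hA]
  calc _ ≤ ∑ EA ∈ A.powerset, subsetWeight p A EA * δ :=
        sum_le_sum fun EA hEA => mul_le_mul_of_nonneg_left (h EA (mem_powerset.1 hEA))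
          (subsetWeight_nonneg hp0 hp1 A EA)
    _ = δ := by rw [← sum_mul, sum_subsetWeight, one_mul]

lemma subsetProb_le_of_superset_not {p : ℝ} (hp0 : 0 ≤ p) (hp1 : p ≤ 1) {A S : Finset α}
    (hA : A ⊆ S) {Q : Finset α → Prop} {δ : ℝ} (hfull : ∀ EB, ¬ Q (A ∪ EB))
    (h : ∀ EA ⊆ A, EA ≠ A → subsetProb p (S \ A) (fun EB => Q (EA ∪ EB)) ≤ δ) :
    subsetProb p S Q ≤ (1 - p ^ A.card) * δ := by
  have hAA := mem_powerset_self A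
  rw [subsetProb_eq_sum_mul_subsetProb_sdiff p hA, ← sum_erase_add _ _ hAA,
    subsetProb_eq_zero p _ fun EB _ => hfull EB, mul_zero, add_zero]
  calc _ ≤ ∑ EA ∈ A.powerset.erase A, subsetWeight p A EA * δ := by
        refine sum_le_sum fun EA hEA => mul_le_mul_of_nonneg_left ?_
          (subsetWeight_nonneg hp0 hp1 A EA)
        exact h EA (mem_powerset.1 (mem_of_mem_erase hEA)) (ne_of_mem_erase hEA)
    _ = (1 - p ^ A.card) * δ := by
        rw [← sum_mul, sum_erase_eq_sub hAA, sum_subsetWeight, subsetWeight_self]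

lemma subsetProb_forall_not_subset_le {ι : Type*} [DecidableEq ι] {p : ℝ} (hp0 : 0 ≤ p)
    (hp1 : p ≤ 1) {k : ℕ} (D : ι → Finset α) (t : Finset ι) {S : Finset α}
    (hDS : ∀ i ∈ t, D i ⊆ S) (hD : (t : Set ι).PairwiseDisjoint D)
    (hDk : ∀ i ∈ t, (D i).card ≤ k) :
    subsetProb p S (fun E => ∀ i ∈ t, ¬ D i ⊆ E) ≤ (1 - p ^ k) ^ t.card := by
  induction t using Finset.induction_on generalizing S with
  | empty => simpa using subsetProb_le_one hp0 hp1 S _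
  | @insert a t ha ih =>
    have hpk : 0 ≤ 1 - p ^ k := sub_nonneg.2 (pow_le_one₀ hp0 hp1)
    have hDa : D a ⊆ S := hDS a (mem_insert_self a t)
    calc _ ≤ (1 - p ^ (D a).card) * (1 - p ^ k) ^ t.card := by
          refine subsetProb_le_of_superset_not hp0 hp1 hDa
            (fun EB hEB => hEB a (mem_insert_self a t) subset_union_left) fun EA _ _ => ?_
          calc _ ≤ subsetProb p (S \ D a) (fun EB => ∀ i ∈ t, ¬ D i ⊆ EB) :=
                subsetProb_mono hp0 hp1 _ fun EB _ hEB i hi hi' =>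
                  hEB i (mem_insert_of_mem hi) (hi'.trans subset_union_right)
            _ ≤ (1 - p ^ k) ^ t.card := by
                refine ih (fun i hi => subset_sdiff.2 ⟨hDS i (mem_insert_of_mem hi), ?_⟩)
                  (hD.subset (by simp)) fun i hi => hDk i (mem_insert_of_mem hi)
                exact hD (by simp [hi]) (by simp) fun h => ha (h ▸ hi)
      _ ≤ (1 - p ^ k) * (1 - p ^ k) ^ t.card := by
          refine mul_le_mul_of_nonneg_right (sub_le_sub_left ?_ 1) (pow_nonneg hpk _)
          exact pow_le_pow_of_le_one hp0 hp1 (hDk a (mem_insert_self a t))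
      _ = (1 - p ^ k) ^ (insert a t).card := by rw [card_insert_of_notMem ha, pow_succ']

end SubsetProb

lemma choose_mul_choose_mul_one_sub_pow_le {N s : ℕ} (hs1 : 1 ≤ s) (hsN : s ≤ N) {q : ℝ}
    (hq0 : 0 ≤ q) (hq1 : q ≤ 1) (hγ : (N : ℝ) ^ 2 * Real.exp (-(q * N) / 2) ≤ 1) :
    (N.choose s * N.choose (s - 1) : ℝ) * (1 - q) ^ (s * (N - (s - 1)))
      ≤ (N : ℝ) ^ 2 * Real.exp (-(q * N) / 2) := by
  set u := N - (s - 1)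
  set t := min s u
  -- both binomials are at most `N ^ t`, and `s + u = N + 1` gives `s u ≥ N t / 2`
  have hN : 0 < N := by omega
  have ht : t ≠ 0 := by omega
  have hchoose : (N.choose s * N.choose (s - 1) : ℝ) ≤ ((N : ℝ) ^ 2) ^ t := by
    rw [sq, mul_pow]
    gcongr
    · exact_mod_cast Nat.choose_le_pow_of_min_le hN (by omega)
    · exact_mod_cast Nat.choose_le_pow_of_min_le hN (by omega)
  have hcover : N * t ≤ 2 * (s * u) :=
    calc N * t ≤ (s + u) * t := Nat.mul_le_mul_right _ (by omega)
      _ = s * t + u * t := add_mul _ _ _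
      _ ≤ s * u + u * s := add_le_add (Nat.mul_le_mul_left _ (min_le_right _ _))
          (Nat.mul_le_mul_left _ (min_le_left _ _))
      _ = 2 * (s * u) := by ring
  have hexp : (1 - q) ^ (s * u) ≤ Real.exp (-(q * N) / 2) ^ t := by
    have hcover' : (N : ℝ) * t ≤ 2 * (s * u : ℕ) := by exact_mod_cast hcover
    calc (1 - q) ^ (s * u) ≤ Real.exp (-q) ^ (s * u) :=
          pow_le_pow_left₀ (by linarith) (Real.one_sub_le_exp_neg q) _
      _ = Real.exp (-q * (s * u : ℕ)) := by rw [← Real.exp_nat_mul]; ring_nf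
      _ ≤ Real.exp (-(q * N) / 2 * t) := Real.exp_le_exp.2 (by nlinarith)
      _ = Real.exp (-(q * N) / 2) ^ t := by rw [← Real.exp_nat_mul]; ring_nf
  calc _ ≤ ((N : ℝ) ^ 2) ^ t * Real.exp (-(q * N) / 2) ^ t :=
        mul_le_mul hchoose hexp (by positivity) (by positivity)
    _ = ((N : ℝ) ^ 2 * Real.exp (-(q * N) / 2)) ^ t := (mul_pow _ _ _).symm
    _ ≤ _ := pow_le_of_le_one (by positivity) hγ ht

lemma subsetProb_not_exists_matching_le {α : Type*} [DecidableEq α] {p : ℝ} (hp0 : 0 ≤ p)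
    (hp1 : p ≤ 1) {k N : ℕ} {S : Finset α} (D : Fin N × Fin N → Finset α) (hDS : ∀ x, D x ⊆ S)
    (hD : Pairwise (Disjoint on D)) (hDk : ∀ x, (D x).card ≤ k) :
    subsetProb p S (fun E => ¬ ∃ m : Fin N → Fin N, Injective m ∧ ∀ j, D (j, m j) ⊆ E)
      ≤ N * ((N : ℝ) ^ 2 * Real.exp (-(p ^ k * N) / 2)) := by
  set γ := (N : ℝ) ^ 2 * Real.exp (-(p ^ k * N) / 2)
  rcases lt_or_ge 1 γ with hγ | hγ
  · have hN : (1 : ℝ) ≤ N := by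
      rcases Nat.eq_zero_or_pos N with h0 | h0
      · norm_num [γ, h0] at hγ
      · exact_mod_cast h0
    calc _ ≤ 1 := subsetProb_le_one hp0 hp1 S _
      _ ≤ N * γ := by nlinarith
  let pairs (s : ℕ) : Finset (Finset (Fin N) × Finset (Fin N)) :=
    powersetCard s univ ×ˢ powersetCard (s - 1) univ
  have hHall : ∀ E, (¬ ∃ m : Fin N → Fin N, Injective m ∧ ∀ j, D (j, m j) ⊆ E) →
      ∃ s ∈ Icc 1 N, ∃ q ∈ pairs s, ∀ x ∈ q.1 ×ˢ q.2ᶜ, ¬ D x ⊆ E := by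
    intro E hE
    obtain ⟨s, T, hcard, hsT⟩ := exists_card_add_one_eq_of_not_exists_injective
      (fun j => univ.filter fun y => D (j, y) ⊆ E) (by simp) (by simpa using hE)
    refine ⟨s.card, mem_Icc.2 ⟨by omega, (card_le_univ s).trans (by simp)⟩, (s, T),
      mem_product.2 ⟨mem_powersetCard.2 ⟨subset_univ _, rfl⟩,
        mem_powersetCard.2 ⟨subset_univ _, show T.card = s.card - 1 by omega⟩⟩, ?_⟩
    rintro ⟨j, y⟩ hx hDx
    simp only [mem_product, mem_compl] at hx
    exact hx.2 (hsT j hx.1 (by simpa using hDx))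
  have hpk0 : 0 ≤ p ^ k := pow_nonneg hp0 k
  have hpk1 : p ^ k ≤ 1 := pow_le_one₀ hp0 hp1
  calc _ ≤ subsetProb p S
        (fun E => ∃ s ∈ Icc 1 N, ∃ q ∈ pairs s, ∀ x ∈ q.1 ×ˢ q.2ᶜ, ¬ D x ⊆ E) :=
        subsetProb_mono hp0 hp1 S fun E _ => hHall E
    _ ≤ ∑ s ∈ Icc 1 N, ∑ q ∈ pairs s,
          subsetProb p S (fun E => ∀ x ∈ q.1 ×ˢ q.2ᶜ, ¬ D x ⊆ E) :=
        (subsetProb_exists_le_sum hp0 hp1 S _ _).trans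
          (sum_le_sum fun s _ => subsetProb_exists_le_sum hp0 hp1 S _ _)
    _ ≤ ∑ s ∈ Icc 1 N, ∑ q ∈ pairs s, (1 - p ^ k) ^ (s * (N - (s - 1))) := by
        refine sum_le_sum fun s _ => sum_le_sum fun q hq => ?_
        simp only [pairs, mem_product, mem_powersetCard] at hq
        refine (subsetProb_forall_not_subset_le hp0 hp1 D _ (fun x _ => hDS x)
          (hD.set_pairwise _) (fun x _ => hDk x)).trans_eq ?_
        rw [card_product, card_compl, hq.1.2, hq.2.2, Fintype.card_fin]
    _ = ∑ s ∈ Icc 1 N,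
          (N.choose s * N.choose (s - 1) : ℝ) * (1 - p ^ k) ^ (s * (N - (s - 1))) := by
        simp [pairs, card_product, card_powersetCard]
    _ ≤ ∑ s ∈ Icc 1 N, γ := sum_le_sum fun s hs => by
        rw [mem_Icc] at hs
        exact choose_mul_choose_mul_one_sub_pow_le hs.1 hs.2 hpk0 hpk1 hγ
    _ = N * γ := by simp

lemma pathGraph_walk_le_add_length {r : ℕ} {u v : Fin r}
    (w : (SimpleGraph.pathGraph r).Walk u v) :
    (v : ℕ) ≤ u + w.length ∧ (u : ℕ) ≤ v + w.length := by
  induction w with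
  | nil => simp
  | cons h _ ih =>
    rw [SimpleGraph.pathGraph_adj] at h
    rw [SimpleGraph.Walk.length_cons]
    omega

lemma graphPow_pathGraph_adj {r k : ℕ} {u v : Fin r}
    (h : (graphPow (SimpleGraph.pathGraph r) k).Adj u v) :
    u ≠ v ∧ (u : ℕ) ≤ v + k ∧ (v : ℕ) ≤ u + k := by
  obtain ⟨hne, hreach, hdist⟩ := h
  obtain ⟨w, hw⟩ := hreach.exists_walk_length_eq_dist
  have := pathGraph_walk_le_add_length w
  exact ⟨hne, by omega, by omega⟩

section Grid

variable {n r N : ℕ} (hrN : r * N ≤ n) (k : ℕ)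

/-- The vertex `j + N c`, i.e. row `j` of column `c` when `r N` of the `n` vertices are
arranged in `r` columns of height `N`. -/
def cell (c : Fin r) (j : Fin N) : Fin n :=
  Fin.castLE hrN (finProdFinEquiv (c, j))

lemma cell_inj {c c' : Fin r} {j j' : Fin N} :
    cell hrN c j = cell hrN c' j' ↔ c = c' ∧ j = j' :=
  (Fin.castLE_injective hrN).eq_iff.trans (finProdFinEquiv.injective.eq_iff.trans Prod.ext_iff)

lemma cell_div (c : Fin r) (j : Fin N) : (cell hrN c j : ℕ) / N = c := by
  simp only [cell, Fin.val_castLE, finProdFinEquiv_apply_val]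
  rw [Nat.add_mul_div_left _ _ j.pos, Nat.div_eq_of_lt j.isLt, zero_add]

lemma mk_cell_mem_edgeCandidates {c c' : Fin r} (h : c ≠ c') (j j' : Fin N) :
    s(cell hrN c j, cell hrN c' j') ∈ edgeCandidates n := by
  simp [edgeCandidates, cell_inj, h]

def lowEdges (n N i : ℕ) : Finset (Sym2 (Fin n)) :=
  (edgeCandidates n).filter fun e => ∀ x ∈ e, (x : ℕ) / N < i

lemma mk_cell_mem_lowEdges {i : ℕ} {c c' : Fin r} (hc : c ≠ c') (hci : (c : ℕ) < i)
    (hc'i : (c' : ℕ) < i) (j j' : Fin N) :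
    s(cell hrN c j, cell hrN c' j') ∈ lowEdges n N i := by
  refine mem_filter.2 ⟨mk_cell_mem_edgeCandidates hrN hc j j', fun x hx => ?_⟩
  rcases Sym2.mem_iff.1 hx with rfl | rfl <;> rwa [cell_div]

/-- Row `j` of `σ` describes the copy `c ↦ cell c (σ c j)` of `P_r^k`; the linking condition asks
for the edges of these copies that lie within the first `i` columns. -/
def IsLinking (E : Finset (Sym2 (Fin n))) (i : ℕ) (σ : Fin r → Fin N → Fin N) : Prop :=
  (∀ c, Injective (σ c)) ∧
    ∀ j (c c' : Fin r), (c' : ℕ) < c → (c : ℕ) < i → (c : ℕ) ≤ c' + k →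
      s(cell hrN c (σ c j), cell hrN c' (σ c' j)) ∈ E

def Linkable (E : Finset (Sym2 (Fin n))) (i : ℕ) : Prop :=
  ∃ σ, IsLinking hrN k E i σ

lemma linkable_zero (E : Finset (Sym2 (Fin n))) : Linkable hrN k E 0 :=
  ⟨fun _ => id, fun _ => injective_id, fun _ _ _ _ h => absurd h (Nat.not_lt_zero _)⟩

variable {hrN k}

lemma IsLinking.mono {E E' : Finset (Sym2 (Fin n))} {i : ℕ} {σ : Fin r → Fin N → Fin N}
    (h : IsLinking hrN k E i σ) (hE : E ⊆ E') : IsLinking hrN k E' i σ :=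
  ⟨h.1, fun j c c' h1 h2 h3 => hE (h.2 j c c' h1 h2 h3)⟩

lemma IsLinking.of_union_of_disjoint {EA EB : Finset (Sym2 (Fin n))} {i : ℕ}
    {σ : Fin r → Fin N → Fin N} (h : IsLinking hrN k (EA ∪ EB) i σ)
    (hEB : Disjoint EB (lowEdges n N i)) : IsLinking hrN k EA i σ := by
  refine ⟨h.1, fun j c c' h1 h2 h3 => ?_⟩
  refine (mem_union.1 (h.2 j c c' h1 h2 h3)).resolve_right fun hB => disjoint_left.1 hEB hB ?_
  exact mk_cell_mem_lowEdges hrN (fun hcc => by simp [hcc] at h1) h2 (h1.trans h2) _ _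

variable (k) in
def backColumns (c : Fin r) : Finset (Fin r) :=
  univ.filter fun c' => (c' : ℕ) < c ∧ (c : ℕ) ≤ c' + k

lemma card_backColumns_le (c : Fin r) : (backColumns k c).card ≤ k :=
  calc (backColumns k c).card = ((backColumns k c).map Fin.valEmbedding).card := (card_map _).symm
    _ ≤ (Ico ((c : ℕ) - k) c).card := card_le_card fun x => by simp [backColumns]; omega
    _ ≤ k := by simp only [Nat.card_Ico]; omega

variable (hrN k) in
/-- For `x = (j, y)`: the edges needed to append `cell c y` to copy `j` of `σ`. -/
def extensionEdges (σ : Fin r → Fin N → Fin N) (c : Fin r) (x : Fin N × Fin N) :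
    Finset (Sym2 (Fin n)) :=
  (backColumns k c).image fun c' => s(cell hrN c x.2, cell hrN c' (σ c' x.1))

end Grid

section Extension

variable {n r N k : ℕ} {hrN : r * N ≤ n} {σ : Fin r → Fin N → Fin N}

lemma card_extensionEdges_le (c : Fin r) (x : Fin N × Fin N) :
    (extensionEdges hrN k σ c x).card ≤ k :=
  card_image_le.trans (card_backColumns_le c)

lemma extensionEdges_subset (c : Fin r) (x : Fin N × Fin N) :
    extensionEdges hrN k σ c x ⊆ edgeCandidates n \ lowEdges n N c := by
  intro e he
  obtain ⟨c', hc', rfl⟩ := mem_image.1 he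
  have hlt : (c' : ℕ) < c := (mem_filter.1 hc').2.1
  refine mem_sdiff.2 ⟨mk_cell_mem_edgeCandidates hrN (fun h => by simp [h] at hlt) _ _,
    fun hlow => ?_⟩
  have := (mem_filter.1 hlow).2 (cell hrN c x.2) (Sym2.mem_mk_left _ _)
  rw [cell_div] at this
  exact lt_irrefl _ this

lemma pairwise_disjoint_extensionEdges (hσ : ∀ c, Injective (σ c)) (c : Fin r) :
    Pairwise (Disjoint on extensionEdges hrN k σ c) := by
  intro x x' hxx'
  refine disjoint_left.2 fun e he he' => hxx' ?_
  obtain ⟨c1, hc1, rfl⟩ := mem_image.1 he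
  obtain ⟨c2, hc2, he2⟩ := mem_image.1 he'
  have h1 : (c1 : ℕ) < c := (mem_filter.1 hc1).2.1
  rcases Sym2.eq_iff.1 he2 with ⟨hy, hj⟩ | ⟨hy, -⟩
  · obtain ⟨-, hy⟩ := (cell_inj hrN).1 hy
    obtain ⟨rfl, hj⟩ := (cell_inj hrN).1 hj
    exact Prod.ext (hσ c2 hj).symm hy.symm
  · obtain ⟨rfl, -⟩ := (cell_inj hrN).1 hy
    exact absurd h1 (lt_irrefl _)

lemma IsLinking.update {E : Finset (Sym2 (Fin n))} {i : ℕ} (hi : i < r)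
    (h : IsLinking hrN k E i σ) {m : Fin N → Fin N} (hm : Injective m)
    (hE : ∀ j, extensionEdges hrN k σ ⟨i, hi⟩ (j, m j) ⊆ E) :
    IsLinking hrN k E (i + 1) (update σ ⟨i, hi⟩ m) := by
  refine ⟨fun c => ?_, fun j c c' h1 h2 h3 => ?_⟩
  · rcases eq_or_ne c ⟨i, hi⟩ with rfl | hc
    · simpa using hm
    · simpa [hc] using h.1 c
  · have hc' : c' ≠ ⟨i, hi⟩ := fun hc' => by simp [hc'] at h1; omega
    rw [update_of_ne hc']
    rcases Nat.lt_succ_iff_lt_or_eq.1 h2 with h2 | h2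
    · have hc : c ≠ ⟨i, hi⟩ := fun hc => by simp [hc] at h2
      rw [update_of_ne hc]
      exact h.2 j c c' h1 h2 h3
    · obtain rfl : c = ⟨i, hi⟩ := Fin.ext h2
      rw [update_self]
      exact hE j (mem_image_of_mem _ (mem_filter.2 ⟨mem_univ _, h1, h3⟩))

end Extension

lemma IsLinking.hasFactor {n r k : ℕ} {hrN : r * (n / r) ≤ n} {E : Finset (Sym2 (Fin n))}
    {σ : Fin r → Fin (n / r) → Fin (n / r)} (h : IsLinking hrN k E r σ) :
    HasFactor (graphPow (SimpleGraph.pathGraph r) k)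
      (SimpleGraph.fromEdgeSet (E : Set (Sym2 (Fin n)))) := by
  refine ⟨fun j c => cell hrN c (σ c j),
    fun j => ⟨fun c c' hcc => ((cell_inj hrN).1 hcc).1, fun u v huv => ?_⟩,
    fun j j' hjj u v huv => ?_⟩
  · obtain ⟨hne, hu, hv⟩ := graphPow_pathGraph_adj huv
    refine (SimpleGraph.fromEdgeSet_adj _).2 ⟨?_, fun h => hne ((cell_inj hrN).1 h).1⟩
    rcases lt_or_gt_of_ne (Fin.val_ne_of_ne hne) with hlt | hlt
    · rw [Sym2.eq_swap]
      exact h.2 j v u hlt v.isLt (by omega)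
    · exact h.2 j u v hlt u.isLt (by omega)
  · obtain ⟨rfl, hσ⟩ := (cell_inj hrN).1 huv
    exact hjj (h.1 u hσ)

lemma subsetProb_linkable_not_linkable_succ_le {n r N k : ℕ} (hrN : r * N ≤ n) {p : ℝ}
    (hp0 : 0 ≤ p) (hp1 : p ≤ 1) {i : ℕ} (hi : i < r) :
    subsetProb p (edgeCandidates n) (fun E => Linkable hrN k E i ∧ ¬ Linkable hrN k E (i + 1))
      ≤ N * ((N : ℝ) ^ 2 * Real.exp (-(p ^ k * N) / 2)) := by
  refine subsetProb_le_of_forall_sdiff_le hp0 hp1 (filter_subset _ _ : lowEdges n N i ⊆ _)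
    fun EA _ => ?_
  by_cases hA : Linkable hrN k EA i
  · obtain ⟨σ, hσ⟩ := hA
    refine (subsetProb_mono hp0 hp1 _ fun EB _ hEB => ?_).trans
      (subsetProb_not_exists_matching_le hp0 hp1 (extensionEdges hrN k σ ⟨i, hi⟩)
        (extensionEdges_subset _) (pairwise_disjoint_extensionEdges hσ.1 _)
        (card_extensionEdges_le _))
    rintro ⟨m, hm, hmE⟩
    exact hEB.2 ⟨_, (hσ.mono subset_union_left).update hi hm
      fun j => (hmE j).trans subset_union_right⟩
  · rw [subsetProb_eq_zero]
    · positivity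
    · rintro EB hEB ⟨⟨σ, hσ⟩, -⟩
      exact hA ⟨σ, hσ.of_union_of_disjoint (disjoint_sdiff_self_left.mono_left hEB)⟩

lemma one_sub_le_prob_hasFactor {n r k : ℕ} {p : ℝ} (hp0 : 0 ≤ p) (hp1 : p ≤ 1) :
    1 - r * ((n / r : ℕ) * (((n / r : ℕ) : ℝ) ^ 2 * Real.exp (-(p ^ k * (n / r : ℕ)) / 2)))
      ≤ prob n p (HasFactor (graphPow (SimpleGraph.pathGraph r) k)) := by
  have hrN : r * (n / r) ≤ n := Nat.mul_div_le n r
  have hfail : subsetProb p (edgeCandidates n) (fun E => ¬ Linkable hrN k E r)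
      ≤ r * ((n / r : ℕ) * (((n / r : ℕ) : ℝ) ^ 2 * Real.exp (-(p ^ k * (n / r : ℕ)) / 2))) :=
    calc _ ≤ subsetProb p (edgeCandidates n)
          (fun E => ∃ i ∈ range r, Linkable hrN k E i ∧ ¬ Linkable hrN k E (i + 1)) :=
          subsetProb_mono hp0 hp1 _ fun E _ hE => by
            obtain ⟨i, hi, h⟩ := Nat.exists_lt_and_not_succ_of_not (linkable_zero hrN k E) hE
            exact ⟨i, mem_range.2 hi, h⟩
      _ ≤ _ := subsetProb_exists_le_sum hp0 hp1 _ _ _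
      _ ≤ _ := sum_le_sum fun i hi =>
          subsetProb_linkable_not_linkable_succ_le hrN hp0 hp1 (mem_range.1 hi)
      _ = _ := by rw [sum_const, card_range, nsmul_eq_mul]
  have hlinked := subsetProb_mono hp0 hp1 (edgeCandidates n)
    (Q := fun E => Linkable hrN k E r)
    (Q' := fun E => HasFactor (graphPow (SimpleGraph.pathGraph r) k)
      (SimpleGraph.fromEdgeSet (E : Set (Sym2 (Fin n)))))
    fun E _ ⟨_, hσ⟩ => IsLinking.hasFactor hσ
  rw [prob_eq_subsetProb]
  linarith [subsetProb_add_subsetProb_not p (edgeCandidates n) (fun E => Linkable hrN k E r)]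

lemma tendsto_pow_mul_exp_neg_mul_rpow (m : ℕ) {c a : ℝ} (hc : 0 < c) (ha : 0 < a) :
    Tendsto (fun n : ℕ => (n : ℝ) ^ m * Real.exp (-(c * (n : ℝ) ^ a))) atTop (nhds 0) := by
  refine ((tendsto_rpow_mul_exp_neg_mul_atTop_nhds_zero (m / a) c hc).comp
    ((tendsto_rpow_atTop ha).comp tendsto_natCast_atTop_atTop)).congr fun n => ?_
  simp only [comp_apply]
  rw [← Real.rpow_mul (Nat.cast_nonneg n), mul_div_cancel₀ _ ha.ne', Real.rpow_natCast, neg_mul]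

lemma inv_mul_rpow_le_pow_mul_div {n r k : ℕ} (hk : 0 < k) (hr : 0 < r) (hn : r ≤ n) {ε q : ℝ}
    (hq : (n : ℝ) ^ (-1 / (k : ℝ) + ε) ≤ q) :
    (4 * r : ℝ)⁻¹ * (n : ℝ) ^ ((k : ℝ) * ε) ≤ q ^ k * (n / r : ℕ) / 2 := by
  have hn0 : (0 : ℝ) < n := by exact_mod_cast hr.trans_le hn
  have hpk : (n : ℝ) ^ ((k : ℝ) * ε - 1) ≤ q ^ k := by
    calc (n : ℝ) ^ ((k : ℝ) * ε - 1) = ((n : ℝ) ^ (-1 / (k : ℝ) + ε)) ^ k := by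
          rw [← Real.rpow_natCast, ← Real.rpow_mul hn0.le]
          congr 1
          field_simp
          ring
      _ ≤ q ^ k := pow_le_pow_left₀ (by positivity) hq k
  have hN : (n : ℝ) ≤ 2 * (r * (n / r : ℕ)) := by exact_mod_cast Nat.le_two_mul_mul_div_of_le hr hn
  calc (4 * r : ℝ)⁻¹ * (n : ℝ) ^ ((k : ℝ) * ε)
      = (n : ℝ) ^ ((k : ℝ) * ε - 1) * n / (4 * r) := by
        rw [Real.rpow_sub hn0, Real.rpow_one]
        field_simp
    _ ≤ (n : ℝ) ^ ((k : ℝ) * ε - 1) * (2 * (r * (n / r : ℕ))) / (4 * r) := by gcongr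
    _ = (n : ℝ) ^ ((k : ℝ) * ε - 1) * (n / r : ℕ) / 2 := by field_simp; ring
    _ ≤ q ^ k * (n / r : ℕ) / 2 := by gcongr

end RandomGraphs

/-- Suppose that `ε > 0`, that `k, r ≥ 2` are integers, and that
`p = p(n) ≥ n^(-1/k + ε)`. Then a.a.s. `G_{n,p}` has a `P_r^k`-factor. -/
theorem aas_path_power_factor (ε : ℝ) (hε : 0 < ε) (k r : ℕ) (hk : 2 ≤ k) (hr : 2 ≤ r)
    (p : ℕ → ℝ) (hp : ∀ n, 0 ≤ p n ∧ p n ≤ 1)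
    (hplb : ∀ n : ℕ, 1 ≤ n → (n : ℝ) ^ (-1 / (k : ℝ) + ε) ≤ p n) :
    Tendsto
      (fun n => prob n (p n)
        (fun G => HasFactor (graphPow (SimpleGraph.pathGraph r) k) G))
      atTop (nhds 1) := by
  have hk0 : 0 < k := by omega
  have hr0 : 0 < r := by omega
  have hlower : Tendsto (fun n : ℕ =>
      1 - r * ((n : ℝ) ^ 3 * Real.exp (-((4 * r : ℝ)⁻¹ * (n : ℝ) ^ ((k : ℝ) * ε)))))
      atTop (nhds 1) := by
    simpa using ((tendsto_pow_mul_exp_neg_mul_rpow 3 (by positivity) (by positivity)).const_mul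
      (r : ℝ)).const_sub 1
  refine tendsto_of_tendsto_of_tendsto_of_le_of_le' hlower tendsto_const_nhds ?_
    (Eventually.of_forall fun n => ?_)
  · filter_upwards [eventually_ge_atTop r] with n hn
    refine le_trans ?_ (one_sub_le_prob_hasFactor (hp n).1 (hp n).2)
    have hexp := inv_mul_rpow_le_pow_mul_div hk0 hr0 hn (hplb n (by omega))
    have hN : ((n / r : ℕ) : ℝ) ≤ n := by exact_mod_cast Nat.div_le_self n r
    refine sub_le_sub_left (mul_le_mul_of_nonneg_left ?_ (Nat.cast_nonneg r)) 1
    calc ((n / r : ℕ) : ℝ) * (((n / r : ℕ) : ℝ) ^ 2 * Real.exp (-(p n ^ k * (n / r : ℕ)) / 2))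
        = ((n / r : ℕ) : ℝ) ^ 3 * Real.exp (-(p n ^ k * (n / r : ℕ)) / 2) := by ring
      _ ≤ _ := by gcongr; linarith
  · exact (prob_eq_subsetProb _ _ _).trans_le (subsetProb_le_one (hp n).1 (hp n).2 _ _)
end

section
/- Let k, r ≥ 2 be integers. Then d_1^max(P_r^k) ≤ k, i.e. every subgraph H of P_r^k with at least 2 vertices satisfies e_H/(v_H − 1) ≤ k. -/
open RandomGraphs

open Finset

namespace SimpleGraph

variable {V : Type*} [LinearOrder V] {G : SimpleGraph V}

theorem inf_lt_sup_and_adj_of_mem_edgeSet {e : Sym2 V} (he : e ∈ G.edgeSet) :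
    e.inf < e.sup ∧ G.Adj e.inf e.sup := by
  induction e with
  | _ a b =>
    rcases lt_or_gt_of_ne (G.ne_of_adj he) with h | h
    · simpa [h, h.le] using he
    · simpa [h, h.le] using he.symm

theorem Subgraph.ncard_edgeSet_le_mul_ncard_verts_sub_one [Fintype V] {k : ℕ}
    (hG : ∀ v, {u | u < v ∧ G.Adj u v}.ncard ≤ k) (H : G.Subgraph) (hH : H.verts.Nonempty) :
    H.edgeSet.ncard ≤ k * (H.verts.ncard - 1) := by
  classical
  obtain ⟨m, hm, hm_min⟩ := Set.exists_min_image H.verts id (Set.toFinite _) hH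
  have hsup_mem : ∀ e ∈ H.edgeSet, e.sup ∈ H.verts \ {m} := by
    intro e he
    obtain ⟨hlt, hadj⟩ := inf_lt_sup_and_adj_of_mem_edgeSet (G := H.spanningCoe) he
    exact ⟨H.edge_vert hadj.symm, (hm_min _ (H.edge_vert hadj)).trans_lt hlt |>.ne'⟩
  have hfibre : ∀ v, {e ∈ H.edgeSet.toFinset | e.sup = v}.card ≤ k := by
    intro v
    calc {e ∈ H.edgeSet.toFinset | e.sup = v}.card
        ≤ {u | u < v ∧ G.Adj u v}.toFinset.card := by
          refine card_le_card_of_injOn Sym2.inf ?_ ?_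
          · intro e he
            simp only [coe_filter, Set.coe_toFinset, Set.mem_toFinset, Set.mem_ofPred_eq] at he ⊢
            obtain ⟨hlt, hadj⟩ := inf_lt_sup_and_adj_of_mem_edgeSet (G := H.spanningCoe) he.1
            rw [← he.2]
            exact ⟨hlt, H.adj_sub hadj⟩
          · intro e he e' he' h
            simp only [coe_filter, Set.mem_toFinset, Set.mem_ofPred_eq] at he he'
            exact Sym2.inf_eq_inf_and_sup_eq_sup.mp ⟨h, he.2.trans he'.2.symm⟩
      _ ≤ k := by rw [← Set.ncard_eq_toFinset_card']; exact hG v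
  calc H.edgeSet.ncard = H.edgeSet.toFinset.card := Set.ncard_eq_toFinset_card' _
    _ ≤ k * (H.verts \ {m}).toFinset.card :=
      card_le_mul_card_image_of_maps_to (by simpa using hsup_mem) k (fun v _ ↦ hfibre v)
    _ = k * (H.verts.ncard - 1) := by
      rw [← Set.ncard_eq_toFinset_card', Set.ncard_sdiff_singleton_of_mem hm]

theorem Walk.pathGraph_val_le_val_add_length {n : ℕ} {u v : Fin n} (p : (pathGraph n).Walk u v) :
    (v : ℕ) ≤ u + p.length := by
  induction p with
  | nil => simp
  | cons h _ ih =>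
    rw [pathGraph_adj] at h
    simp only [Walk.length_cons]
    omega

theorem graphPow_pathGraph_val_le_val_add {r k : ℕ} {u v : Fin r}
    (h : (graphPow (pathGraph r) k).Adj u v) : (v : ℕ) ≤ u + k := by
  obtain ⟨p, hp⟩ := h.2.1.exists_walk_length_eq_dist
  have := p.pathGraph_val_le_val_add_length
  have := h.2.2
  omega

theorem ncard_lower_adj_graphPow_pathGraph_le (r k : ℕ) (v : Fin r) :
    {u | u < v ∧ (graphPow (pathGraph r) k).Adj u v}.ncard ≤ k := by
  have hmaps : ∀ u ∈ {u | u < v ∧ (graphPow (pathGraph r) k).Adj u v},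
      (u : ℕ) ∈ Set.Ico ((v : ℕ) - k) v := by
    rintro u ⟨hlt, hadj⟩
    have := graphPow_pathGraph_val_le_val_add hadj
    exact ⟨by omega, hlt⟩
  calc _ ≤ (Set.Ico ((v : ℕ) - k) v).ncard :=
        Set.ncard_le_ncard_of_injOn _ hmaps Fin.val_injective.injOn
    _ ≤ k := by rw [Set.ncard_Ico_nat]; omega

end SimpleGraph

theorem one_density_path_power_le_general (k r : ℕ) :
    ∀ H : (graphPow (SimpleGraph.pathGraph r) k).Subgraph, 2 ≤ H.verts.ncard →
      (H.edgeSet.ncard : ℝ) / ((H.verts.ncard : ℝ) - 1) ≤ k := by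
  intro H hv
  have hedges : H.edgeSet.ncard ≤ k * (H.verts.ncard - 1) :=
    H.ncard_edgeSet_le_mul_ncard_verts_sub_one
      (SimpleGraph.ncard_lower_adj_graphPow_pathGraph_le r k)
      (Set.nonempty_of_ncard_ne_zero (by omega))
  have hv' : (2 : ℝ) ≤ H.verts.ncard := by exact_mod_cast hv
  rw [div_le_iff₀ (by linarith)]
  calc (H.edgeSet.ncard : ℝ) ≤ (k * (H.verts.ncard - 1) : ℕ) := by exact_mod_cast hedges
    _ = k * (H.verts.ncard - 1) := by push_cast [Nat.cast_sub (by omega : 1 ≤ H.verts.ncard)]; rfl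

/-- Let `k, r ≥ 2` be integers. Then `d₁^max (P_r^k) ≤ k`, i.e. every
subgraph `H` of `P_r^k` with at least 2 vertices satisfies `e_H / (v_H - 1) ≤ k`. -/
theorem one_density_path_power_le (k r : ℕ) (hk : 2 ≤ k) (hr : 2 ≤ r) :
    ∀ H : (graphPow (SimpleGraph.pathGraph r) k).Subgraph, 2 ≤ H.verts.ncard →
      (H.edgeSet.ncard : ℝ) / ((H.verts.ncard : ℝ) - 1) ≤ k :=
  one_density_path_power_le_general k r
end

section
/- Let k ≥ 2, j ≥ 3 and ℓ ≥ 2k, and consider the skeleton of the (j,ℓ,k)-absorber with spine P and absorption vertex v. Then the graph P' obtained from the skeleton by deleting the edges a_{i,1}a_{i,2} and b_{i,1}b_{i,2} for all i = 1,…,j is a path with vertex set V(P) ∪ {v} whose endvertices are the same as the endvertices of P. -/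
open Filter

open RandomGraphs


namespace RandomGraphs

/-- Number of vertices of the spine `P` of the `(j,ℓ,k)`-absorber: `s = j(2ℓ+4)+ℓ`. -/
def absSpineLen (j ℓ : ℕ) : ℕ := j * (2 * ℓ + 4) + ℓ

/-- The (0-based) position of the junction `a_{i,1}` (for `1 ≤ i ≤ j`);
in 1-based terms it is the `(ℓ+1)`-st vertex of the segment `S_i`. -/
def aJ1 (ℓ i : ℕ) : ℕ := (i - 1) * (2 * ℓ + 4) + ℓ

/-- The (0-based) position of the junction `a_{i,2}`. -/
def aJ2 (ℓ i : ℕ) : ℕ := (i - 1) * (2 * ℓ + 4) + ℓ + 1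

/-- The (0-based) position of the junction `b_{i,1}`. -/
def bJ1 (ℓ i : ℕ) : ℕ := (i - 1) * (2 * ℓ + 4) + 2 * ℓ + 2

/-- The (0-based) position of the junction `b_{i,2}`. -/
def bJ2 (ℓ i : ℕ) : ℕ := (i - 1) * (2 * ℓ + 4) + 2 * ℓ + 3

/-- The spine `P`: the path `0 - 1 - ⋯ - (s-1)` on the vertex set `Fin (s+1)`,
where the last vertex `s` is the absorption vertex `v` (not on `P`). -/
def absSpine (j ℓ : ℕ) : SimpleGraph (Fin (absSpineLen j ℓ + 1)) :=
  SimpleGraph.fromRel (fun u v => (u : ℕ) + 1 = (v : ℕ) ∧ (v : ℕ) < absSpineLen j ℓ)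

/-- The extra edges of the skeleton of the `(j,ℓ,k)`-absorber (as a relation on the
numerical values of the vertices): the two edges `a_{1,1}v`, `v b_{1,2}` at the absorption
vertex `v` (which has value `s`), together with all the junction edges. -/
def absExtraRel (j ℓ : ℕ) (x y : ℕ) : Prop :=
  (x = absSpineLen j ℓ ∧ (y = aJ1 ℓ 1 ∨ y = bJ2 ℓ 1)) ∨
  (∃ i, 1 ≤ i ∧ i ≤ j - 2 ∧
    ((x = aJ2 ℓ i ∧ y = bJ2 ℓ (i + 1)) ∨ (x = bJ1 ℓ i ∧ y = aJ1 ℓ (i + 1)))) ∨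
  (x = aJ2 ℓ j ∧ y = bJ2 ℓ j) ∨
  (x = aJ2 ℓ (j - 1) ∧ y = aJ1 ℓ j) ∨
  (x = bJ1 ℓ (j - 1) ∧ y = bJ1 ℓ j)

/-- The skeleton of the `(j,ℓ,k)`-absorber: the spine `P` together with the absorption
vertex `v` and the edges `a_{1,1}v`, `vb_{1,2}` and the junction edges. -/
def absSkeleton (j ℓ : ℕ) : SimpleGraph (Fin (absSpineLen j ℓ + 1)) :=
  SimpleGraph.fromRel (fun u v =>
    ((u : ℕ) + 1 = (v : ℕ) ∧ (v : ℕ) < absSpineLen j ℓ) ∨ absExtraRel j ℓ u v)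

/-- The augmented path `P'` of the `(j,ℓ,k)`-absorber: obtained from the skeleton by
deleting the edges `a_{i,1}a_{i,2}` and `b_{i,1}b_{i,2}` for all `i = 1, …, j`. -/
def absAugPath (j ℓ : ℕ) : SimpleGraph (Fin (absSpineLen j ℓ + 1)) :=
  SimpleGraph.fromRel (fun u v =>
    ((u : ℕ) + 1 = (v : ℕ) ∧ (v : ℕ) < absSpineLen j ℓ ∧
      ¬ ∃ i, 1 ≤ i ∧ i ≤ j ∧ ((u : ℕ) = aJ1 ℓ i ∨ (u : ℕ) = bJ1 ℓ i)) ∨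
    absExtraRel j ℓ u v)

/-- The `(j,ℓ,k)`-absorber `A_{j,ℓ,k} = P^k ∪ (P')^k`, a graph on `s+1` vertices. -/
def absorber (j ℓ k : ℕ) : SimpleGraph (Fin (absSpineLen j ℓ + 1)) :=
  graphPow (absSpine j ℓ) k ⊔ graphPow (absAugPath j ℓ) k

end RandomGraphs

/-!
The walk tracing `P'` is written down explicitly as a sequence of spine positions: it runs along
the spine from `0` to `a_{1,1}`, jumps to `v` and on to `b_{1,2}`, and then covers the rest of the
spine in blocks of `2ℓ + 4` consecutive positions, each block in two monotone runs joined by a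
skeleton edge. The sequence is injective inside a block and the blocks occupy disjoint intervals,
so the walk visits every vertex exactly once, and consecutive entries are joined either by an
undeleted spine edge or by a skeleton edge. Finally `P'` has at most `s` edges (the `s - 1` spine
edges minus the `2j` deleted ones, plus `2j + 1` skeleton edges), which is the length of the walk,
so the walk uses every edge of `P'`.
-/

namespace SimpleGraph

variable {V : Type*} {G : SimpleGraph V}

theorem Walk.IsPath.mem_edges_iff_of_ncard_edgeSet_le [Finite V] {u v : V} {w : G.Walk u v}
    (hw : w.IsPath) (hG : G.edgeSet.ncard ≤ w.length) (e : Sym2 V) :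
    e ∈ G.edgeSet ↔ e ∈ w.edges := by
  classical
  have hcard : {e | e ∈ w.edges}.ncard = w.length := by
    rw [← List.coe_toFinset, Set.ncard_coe_finset,
      List.toFinset_card_of_nodup hw.isTrail.edges_nodup, w.length_edges]
  have := Set.eq_of_subset_of_ncard_le (fun _ he => w.edges_subset_edgeSet he) (hG.trans hcard.ge)
  rw [← this]
  rfl

theorem exists_isHamiltonian_of_injOn [Fintype V] [DecidableEq V] (f : ℕ → V) (N : ℕ)
    (hadj : ∀ t < N, G.Adj (f t) (f (t + 1))) (hinj : Set.InjOn f (Set.Iic N))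
    (hcard : Fintype.card V = N + 1) (hG : G.edgeSet.ncard ≤ N) :
    ∃ w : G.Walk (f 0) (f N), w.IsPath ∧ w.IsHamiltonian ∧ ∀ e, e ∈ G.edgeSet ↔ e ∈ w.edges := by
  set l := (List.range (N + 1)).map f
  have hne : l ≠ [] := by simp [l]
  have hchain : l.IsChain G.Adj :=
    (List.isChain_map f).2 ((List.isChain_range_succ _ N).2 hadj)
  have hnodup : l.Nodup :=
    List.Nodup.map_on (fun x hx y hy => hinj (by simpa [Nat.lt_succ_iff] using hx)
      (by simpa [Nat.lt_succ_iff] using hy)) List.nodup_range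
  let w : G.Walk (f 0) (f N) := (Walk.ofSupport l hne hchain).copy (by simp [l]) (by simp [l])
  have hpath : w.IsPath := Walk.IsPath.mk' (by simpa [w] using hnodup)
  have hlength : w.length = N := by simp [w, l]
  refine ⟨w, hpath, ?_, hpath.mem_edges_iff_of_ncard_edgeSet_le (hlength.symm ▸ hG)⟩
  exact Walk.isHamiltonian_iff_isPath_and_length_eq.2 ⟨hpath, by omega⟩

theorem ncard_edgeSet_fromRel_le {n : ℕ} (r : ℕ → ℕ → Prop) (S : Finset (ℕ × ℕ))
    (hS : ∀ x y, r x y → (x, y) ∈ S) :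
    (fromRel fun u v : Fin n => r u v).edgeSet.ncard ≤ S.card := by
  classical
  calc (fromRel fun u v : Fin n => r u v).edgeSet.ncard
      = (Sym2.map Fin.val '' (fromRel fun u v : Fin n => r u v).edgeSet).ncard :=
        (Set.ncard_image_of_injective _ (Sym2.map.injective Fin.val_injective)).symm
    _ ≤ (S.image fun p => s(p.1, p.2)).card := by
        rw [← Set.ncard_coe_finset]
        refine Set.ncard_le_ncard ?_ (Finset.finite_toSet _)
        rintro _ ⟨e, he, rfl⟩
        induction e using Sym2.ind with
        | _ u v =>
          rw [mem_edgeSet, fromRel_adj] at he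
          simp only [Sym2.map_mk, Finset.coe_image, Set.mem_image, Finset.mem_coe]
          rcases he.2 with h | h
          · exact ⟨_, hS _ _ h, rfl⟩
          · exact ⟨_, hS _ _ h, Sym2.eq_swap⟩
    _ ≤ S.card := Finset.card_image_le

end SimpleGraph

namespace RandomGraphs

lemma mul_add_mul_le_of_add_le {q c j : ℕ} (m : ℕ) (h : q + c ≤ j) : q * m + c * m ≤ j * m := by
  rw [← add_mul]; exact Nat.mul_le_mul_right m h

def IsCut (j ℓ x : ℕ) : Prop := ∃ i, 1 ≤ i ∧ i ≤ j ∧ (x = aJ1 ℓ i ∨ x = bJ1 ℓ i)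

def augRel (j ℓ x y : ℕ) : Prop :=
  (x + 1 = y ∧ y < absSpineLen j ℓ ∧ ¬ IsCut j ℓ x) ∨ absExtraRel j ℓ x y

def AugAdj (j ℓ x y : ℕ) : Prop := augRel j ℓ x y ∨ augRel j ℓ y x

lemma AugAdj.symm {j ℓ x y : ℕ} (h : AugAdj j ℓ x y) : AugAdj j ℓ y x := Or.symm h

lemma absAugPath_adj_iff {j ℓ : ℕ} {u v : Fin (absSpineLen j ℓ + 1)} :
    (absAugPath j ℓ).Adj u v ↔ u ≠ v ∧ AugAdj j ℓ u v :=
  SimpleGraph.fromRel_adj _ u v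

lemma not_isCut_of_lt {j ℓ x : ℕ} (hx : x < ℓ) : ¬ IsCut j ℓ x := by
  rintro ⟨i, -, -, h | h⟩ <;> simp only [aJ1, bJ1] at h <;> omega

lemma not_isCut_of_mem_gap {j ℓ q x : ℕ}
    (hx : q * (2 * ℓ + 4) + ℓ < x ∧ x < q * (2 * ℓ + 4) + 2 * ℓ + 2 ∨
      q * (2 * ℓ + 4) + 2 * ℓ + 2 < x ∧ x < q * (2 * ℓ + 4) + 3 * ℓ + 4) :
    ¬ IsCut j ℓ x := by
  rintro ⟨i, -, -, h⟩
  simp only [aJ1, bJ1] at h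
  rcases lt_trichotomy (i - 1) q with hi | rfl | hi
  · have := mul_add_mul_le_of_add_le (2 * ℓ + 4) (show i - 1 + 1 ≤ q by omega)
    omega
  · omega
  · have := mul_add_mul_le_of_add_le (2 * ℓ + 4) (show q + 1 ≤ i - 1 by omega)
    omega

lemma augAdj_of_spine {j ℓ x y : ℕ} (hxy : x + 1 = y) (hy : y < absSpineLen j ℓ)
    (hx : ¬ IsCut j ℓ x) : AugAdj j ℓ x y :=
  .inl (.inl ⟨hxy, hy, hx⟩)

lemma augAdj_absorption_aJ1 (j ℓ : ℕ) : AugAdj j ℓ (absSpineLen j ℓ) (aJ1 ℓ 1) :=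
  .inl (.inr (.inl ⟨rfl, .inl rfl⟩))

lemma augAdj_absorption_bJ2 (j ℓ : ℕ) : AugAdj j ℓ (absSpineLen j ℓ) (bJ2 ℓ 1) :=
  .inl (.inr (.inl ⟨rfl, .inr rfl⟩))

lemma augAdj_aJ2_bJ2_succ {j ℓ i : ℕ} (hi : 1 ≤ i) (hij : i + 2 ≤ j) :
    AugAdj j ℓ (aJ2 ℓ i) (bJ2 ℓ (i + 1)) :=
  .inl (.inr (.inr (.inl ⟨i, hi, by omega, .inl ⟨rfl, rfl⟩⟩)))

lemma augAdj_bJ1_aJ1_succ {j ℓ i : ℕ} (hi : 1 ≤ i) (hij : i + 2 ≤ j) :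
    AugAdj j ℓ (bJ1 ℓ i) (aJ1 ℓ (i + 1)) :=
  .inl (.inr (.inr (.inl ⟨i, hi, by omega, .inr ⟨rfl, rfl⟩⟩)))

lemma augAdj_aJ2_bJ2_last (j ℓ : ℕ) : AugAdj j ℓ (aJ2 ℓ j) (bJ2 ℓ j) :=
  .inl (.inr (.inr (.inr (.inl ⟨rfl, rfl⟩))))

lemma augAdj_aJ2_aJ1_last (j ℓ : ℕ) : AugAdj j ℓ (aJ2 ℓ (j - 1)) (aJ1 ℓ j) :=
  .inl (.inr (.inr (.inr (.inr (.inl ⟨rfl, rfl⟩)))))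

lemma augAdj_bJ1_bJ1_last (j ℓ : ℕ) : AugAdj j ℓ (bJ1 ℓ (j - 1)) (bJ1 ℓ j) :=
  .inl (.inr (.inr (.inr (.inr (.inr ⟨rfl, rfl⟩)))))

/-- The spine position visited at step `r < 2ℓ + 4` of block `q < j` of the walk along `P'`.
Block `q` covers the spine from `a_{q+1,2}` to `a_{q+2,1}` (to the end of the spine if
`q = j - 1`): for `q ≤ j - 3` it runs up from `b_{q+1,2}` to `a_{q+2,1}`, then down from
`b_{q+1,1}` to `a_{q+1,2}`; block `j - 2` runs up from `b_{j-1,2}` to `a_{j,1}`, then up from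
`a_{j-1,2}` to `b_{j-1,1}`; block `j - 1` runs down from `b_{j,1}` to `a_{j,2}`, then up from
`b_{j,2}` to `s - 1`. -/
def augBlockVertex (j ℓ q r : ℕ) : ℕ :=
  if r ≤ ℓ + 1 then
    if q + 2 ≤ j then q * (2 * ℓ + 4) + 2 * ℓ + 3 + r
    else q * (2 * ℓ + 4) + 2 * ℓ + 2 - r
  else if q + 3 ≤ j then q * (2 * ℓ + 4) + 3 * ℓ + 4 - r
  else if q + 2 = j then q * (2 * ℓ + 4) + r - 1
  else q * (2 * ℓ + 4) + ℓ + 1 + r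

def augPathSeq (j ℓ t : ℕ) : ℕ :=
  if t ≤ ℓ then t
  else if t = ℓ + 1 then absSpineLen j ℓ
  else augBlockVertex j ℓ ((t - (ℓ + 2)) / (2 * ℓ + 4)) ((t - (ℓ + 2)) % (2 * ℓ + 4))

lemma augBlockVertex_injective {j ℓ q r r' : ℕ} (hr : r < 2 * ℓ + 4) (hr' : r' < 2 * ℓ + 4)
    (h : augBlockVertex j ℓ q r = augBlockVertex j ℓ q r') : r = r' := by
  unfold augBlockVertex at h
  split_ifs at h <;> omega

lemma augBlockVertex_mem {j ℓ q r : ℕ} (hr : r < 2 * ℓ + 4) :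
    q * (2 * ℓ + 4) + ℓ < augBlockVertex j ℓ q r ∧
      augBlockVertex j ℓ q r < q * (2 * ℓ + 4) + 3 * ℓ + 5 := by
  unfold augBlockVertex
  split_ifs <;> omega

lemma eq_of_mem_block {ℓ q q' x : ℕ}
    (hx : q * (2 * ℓ + 4) + ℓ < x ∧ x < q * (2 * ℓ + 4) + 3 * ℓ + 5)
    (hx' : q' * (2 * ℓ + 4) + ℓ < x ∧ x < q' * (2 * ℓ + 4) + 3 * ℓ + 5) : q = q' := by
  rcases lt_trichotomy q q' with h | h | h
  · have := mul_add_mul_le_of_add_le (2 * ℓ + 4) (show q + 1 ≤ q' by omega); omega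
  · exact h
  · have := mul_add_mul_le_of_add_le (2 * ℓ + 4) (show q' + 1 ≤ q by omega); omega

lemma augBlockVertex_lt {j ℓ q r : ℕ} (hr : r < 2 * ℓ + 4) (hq : q < j)
    (hlast : q + 1 = j → r ≤ 2 * ℓ + 2) :
    augBlockVertex j ℓ q r < absSpineLen j ℓ := by
  have := mul_add_mul_le_of_add_le (2 * ℓ + 4) (show q + 1 ≤ j by omega)
  have : q + 2 ≤ j → q * (2 * ℓ + 4) + 2 * (2 * ℓ + 4) ≤ j * (2 * ℓ + 4) :=
    mul_add_mul_le_of_add_le _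
  unfold augBlockVertex absSpineLen
  split_ifs <;> omega

lemma augPathSeq_of_le {j ℓ t : ℕ} (ht : t ≤ ℓ) : augPathSeq j ℓ t = t := by
  simp [augPathSeq, ht]

lemma augPathSeq_absorption (j ℓ : ℕ) : augPathSeq j ℓ (ℓ + 1) = absSpineLen j ℓ := by
  simp [augPathSeq]

lemma augPathSeq_block {j ℓ q r : ℕ} (hr : r < 2 * ℓ + 4) :
    augPathSeq j ℓ (ℓ + 2 + q * (2 * ℓ + 4) + r) = augBlockVertex j ℓ q r := by
  have hdiv : (q * (2 * ℓ + 4) + r) / (2 * ℓ + 4) = q := by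
    rw [mul_comm, Nat.mul_add_div (by omega), Nat.div_eq_of_lt hr, add_zero]
  rw [augPathSeq, if_neg (by omega), if_neg (by omega), show ℓ + 2 + q * (2 * ℓ + 4) + r - (ℓ + 2)
    = q * (2 * ℓ + 4) + r by omega, hdiv, Nat.mul_add_mod_of_lt hr]

lemma exists_block_of_le {j ℓ t d : ℕ} (ht : ℓ + 2 ≤ t) (htd : t + d ≤ absSpineLen j ℓ) :
    ∃ q r, r < 2 * ℓ + 4 ∧ t = ℓ + 2 + q * (2 * ℓ + 4) + r ∧ q < j ∧
      (q + 1 = j → r + d ≤ 2 * ℓ + 2) := by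
  obtain ⟨q, r, hr, rfl⟩ : ∃ q r, r < 2 * ℓ + 4 ∧ t = ℓ + 2 + q * (2 * ℓ + 4) + r :=
    ⟨(t - (ℓ + 2)) / (2 * ℓ + 4), (t - (ℓ + 2)) % (2 * ℓ + 4), Nat.mod_lt _ (by omega),
      by have := Nat.div_add_mod' (t - (ℓ + 2)) (2 * ℓ + 4); omega⟩
  unfold absSpineLen at htd
  have hq : q < j := by
    by_contra! h
    have := Nat.mul_le_mul_right (2 * ℓ + 4) h
    omega
  refine ⟨q, r, hr, rfl, hq, fun hj => ?_⟩
  subst hj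
  rw [add_one_mul] at htd
  omega

lemma augPathSeq_cases {j ℓ t : ℕ} (ht : t ≤ absSpineLen j ℓ) :
    t ≤ ℓ ∧ augPathSeq j ℓ t = t ∨ t = ℓ + 1 ∧ augPathSeq j ℓ t = absSpineLen j ℓ ∨
      ∃ q r, r < 2 * ℓ + 4 ∧ t = ℓ + 2 + q * (2 * ℓ + 4) + r ∧
        augPathSeq j ℓ t = augBlockVertex j ℓ q r ∧ augBlockVertex j ℓ q r < absSpineLen j ℓ := by
  rcases le_or_gt t ℓ with h | h
  · exact .inl ⟨h, augPathSeq_of_le h⟩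
  rcases eq_or_ne t (ℓ + 1) with rfl | h'
  · exact .inr (.inl ⟨rfl, augPathSeq_absorption j ℓ⟩)
  obtain ⟨q, r, hr, rfl, hq, hlast⟩ := exists_block_of_le (d := 0) (show ℓ + 2 ≤ t by omega) ht
  exact .inr (.inr ⟨q, r, hr, rfl, augPathSeq_block hr, augBlockVertex_lt hr hq hlast⟩)

lemma augPathSeq_le {j ℓ t : ℕ} (ht : t ≤ absSpineLen j ℓ) :
    augPathSeq j ℓ t ≤ absSpineLen j ℓ := by
  rcases augPathSeq_cases ht with ⟨-, hv⟩ | ⟨-, hv⟩ | ⟨q, r, -, -, hv, hlt⟩ <;> omega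

lemma augPathSeq_last {j ℓ : ℕ} (hj : 1 ≤ j) :
    augPathSeq j ℓ (absSpineLen j ℓ) = absSpineLen j ℓ - 1 := by
  have hs : absSpineLen j ℓ = ℓ + 2 + (j - 1) * (2 * ℓ + 4) + (2 * ℓ + 2) := by
    obtain ⟨i, rfl⟩ : ∃ i, j = i + 1 := ⟨j - 1, by omega⟩
    simp only [absSpineLen, add_one_mul, Nat.add_sub_cancel]; omega
  rw [hs, augPathSeq_block (by omega), augBlockVertex, if_neg (by omega), if_neg (by omega),
    if_neg (by omega)]
  omega

lemma augPathSeq_injOn (j ℓ : ℕ) : Set.InjOn (augPathSeq j ℓ) (Set.Iic (absSpineLen j ℓ)) := by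
  intro t ht t' ht' h
  rw [Set.mem_Iic] at ht ht'
  rcases augPathSeq_cases ht with ⟨hle, hv⟩ | ⟨rfl, hv⟩ | ⟨q, r, hr, rfl, hv, hlt⟩ <;>
  rcases augPathSeq_cases ht' with ⟨hle', hv'⟩ | ⟨rfl, hv'⟩ | ⟨q', r', hr', rfl, hv', hlt'⟩ <;>
  simp only [hv, hv'] at h
  all_goals first | omega | skip
  · have := (augBlockVertex_mem (j := j) (q := q') hr').1; omega
  · have := (augBlockVertex_mem (j := j) (q := q) hr).1; omega
  · obtain rfl := eq_of_mem_block (augBlockVertex_mem hr) (h ▸ augBlockVertex_mem hr')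
    rw [augBlockVertex_injective hr hr' h]

lemma augBlockVertex_succ_adj {j ℓ q r : ℕ} (hr : r + 1 < 2 * ℓ + 4) (hq : q < j)
    (hlast : q + 1 = j → r + 1 ≤ 2 * ℓ + 2) :
    AugAdj j ℓ (augBlockVertex j ℓ q r) (augBlockVertex j ℓ q (r + 1)) := by
  have hM : q * (2 * ℓ + 4) + (2 * ℓ + 4) ≤ j * (2 * ℓ + 4) := by
    simpa using mul_add_mul_le_of_add_le (2 * ℓ + 4) (show q + 1 ≤ j by omega)
  have hM2 : q + 2 ≤ j → q * (2 * ℓ + 4) + 2 * (2 * ℓ + 4) ≤ j * (2 * ℓ + 4) :=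
    mul_add_mul_le_of_add_le _
  have hs : absSpineLen j ℓ = j * (2 * ℓ + 4) + ℓ := rfl
  unfold augBlockVertex
  split_ifs
  -- every step runs along the spine inside a gap between cut positions, except the turn
  -- `r = ℓ + 1` of the block, which is one of the three skeleton edges treated at the end
  all_goals first
    | exfalso; omega
    | exact augAdj_of_spine (by omega) (by omega) (not_isCut_of_mem_gap (q := q) (by omega))
    | exact (augAdj_of_spine (by omega) (by omega) (not_isCut_of_mem_gap (q := q) (by omega))).symm
    | skip
  · convert (augAdj_bJ1_aJ1_succ (j := j) (ℓ := ℓ) (i := q + 1) (by omega) (by omega)).symm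
      using 1 <;> simp only [aJ1, bJ1, add_one_mul, Nat.add_sub_cancel] <;> omega
  · obtain rfl : j = q + 2 := by omega
    convert (augAdj_aJ2_aJ1_last (q + 2) ℓ).symm using 1 <;>
      simp only [aJ1, aJ2, show q + 2 - 1 = q + 1 from rfl, Nat.add_sub_cancel, add_one_mul] <;>
      omega
  · obtain rfl : j = q + 1 := by omega
    convert augAdj_aJ2_bJ2_last (q + 1) ℓ using 1 <;>
      simp only [aJ2, bJ2, Nat.add_sub_cancel] <;> omega

lemma augBlockVertex_adj_next {j ℓ q : ℕ} (hq : q + 2 ≤ j) :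
    AugAdj j ℓ (augBlockVertex j ℓ q (2 * ℓ + 3)) (augBlockVertex j ℓ (q + 1) 0) := by
  unfold augBlockVertex
  rw [if_neg (show ¬ 2 * ℓ + 3 ≤ ℓ + 1 by omega), if_pos (Nat.zero_le _)]
  split_ifs
  all_goals first | (exfalso; omega) | skip
  · convert augAdj_aJ2_bJ2_succ (j := j) (ℓ := ℓ) (i := q + 1) (by omega) (by omega) using 1 <;>
      simp only [aJ2, bJ2, Nat.add_sub_cancel, add_one_mul]
    omega
  · obtain rfl : j = q + 2 := by omega
    convert augAdj_bJ1_bJ1_last (q + 2) ℓ using 1 <;>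
      simp only [bJ1, show q + 2 - 1 = q + 1 from rfl, Nat.add_sub_cancel, add_one_mul] <;> omega

lemma augPathSeq_adj_succ {j ℓ t : ℕ} (hj : 2 ≤ j) (ht : t < absSpineLen j ℓ) :
    AugAdj j ℓ (augPathSeq j ℓ t) (augPathSeq j ℓ (t + 1)) := by
  have hs : 2 * (2 * ℓ + 4) + ℓ ≤ absSpineLen j ℓ := by
    simpa [absSpineLen] using Nat.mul_le_mul_right (2 * ℓ + 4) hj
  rcases lt_trichotomy t ℓ with h | h | h
  · rw [augPathSeq_of_le h.le, augPathSeq_of_le h]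
    exact augAdj_of_spine rfl (by omega) (not_isCut_of_lt h)
  · rw [h, augPathSeq_of_le le_rfl, augPathSeq_absorption]
    simpa [aJ1] using (augAdj_absorption_aJ1 j ℓ).symm
  rcases eq_or_ne t (ℓ + 1) with rfl | h'
  · rw [augPathSeq_absorption, show ℓ + 1 + 1 = ℓ + 2 + 0 * (2 * ℓ + 4) + 0 by simp,
      augPathSeq_block (by omega)]
    simpa [augBlockVertex, bJ2, hj] using augAdj_absorption_bJ2 j ℓ
  obtain ⟨q, r, hr, rfl, hq, hlast⟩ := exists_block_of_le (d := 1) (show ℓ + 2 ≤ t by omega) ht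
  rw [augPathSeq_block hr]
  rcases lt_or_eq_of_le (show r + 1 ≤ 2 * ℓ + 4 by omega) with hr' | hr'
  · rw [show ℓ + 2 + q * (2 * ℓ + 4) + r + 1 = ℓ + 2 + q * (2 * ℓ + 4) + (r + 1) by ring,
      augPathSeq_block (by omega)]
    exact augBlockVertex_succ_adj (by omega) hq hlast
  · obtain rfl : r = 2 * ℓ + 3 := by omega
    rw [show ℓ + 2 + q * (2 * ℓ + 4) + (2 * ℓ + 3) + 1 = ℓ + 2 + (q + 1) * (2 * ℓ + 4) + 0 by
      rw [add_one_mul]; omega, augPathSeq_block (by omega)]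
    exact augBlockVertex_adj_next (by omega)

def cutPositions (j ℓ : ℕ) : Finset ℕ :=
  (Finset.Icc 1 j).image (aJ1 ℓ) ∪ (Finset.Icc 1 j).image (bJ1 ℓ)

lemma mem_cutPositions {j ℓ x : ℕ} : x ∈ cutPositions j ℓ ↔ IsCut j ℓ x := by
  simp only [cutPositions, IsCut, Finset.mem_union, Finset.mem_image, Finset.mem_Icc]
  grind

lemma card_cutPositions (j ℓ : ℕ) : (cutPositions j ℓ).card = 2 * j := by
  have hM : 0 < 2 * ℓ + 4 := by omega
  have hinj : ∀ c, Set.InjOn (fun i => (i - 1) * (2 * ℓ + 4) + c) (Finset.Icc 1 j) := by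
    intro c i hi i' hi' h
    simp only [Finset.coe_Icc, Set.mem_Icc] at hi hi'
    have := Nat.eq_of_mul_eq_mul_right hM (Nat.add_right_cancel h)
    omega
  have hdisj : Disjoint ((Finset.Icc 1 j).image (aJ1 ℓ)) ((Finset.Icc 1 j).image (bJ1 ℓ)) := by
    simp only [Finset.disjoint_left, Finset.mem_image, not_exists, not_and]
    rintro _ ⟨i, -, rfl⟩ i' - h
    have := congrArg (· % (2 * ℓ + 4)) h
    simp only [aJ1, bJ1, add_assoc, Nat.mul_add_mod_of_lt (show ℓ < 2 * ℓ + 4 by omega),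
      Nat.mul_add_mod_of_lt (show 2 * ℓ + 2 < 2 * ℓ + 4 by omega)] at this
    omega
  have hinj_bJ1 : Set.InjOn (bJ1 ℓ) (Finset.Icc 1 j) := fun i hi i' hi' h =>
    hinj (2 * ℓ + 2) hi hi' (by simpa only [bJ1, add_assoc] using h)
  rw [cutPositions, Finset.card_union_of_disjoint hdisj,
    Finset.card_image_of_injOn (f := aJ1 ℓ) (hinj ℓ), Finset.card_image_of_injOn hinj_bJ1,
    Nat.card_Icc]
  omega

def augPairs (j ℓ : ℕ) : Finset (ℕ × ℕ) :=
  ((Finset.range (absSpineLen j ℓ - 1) \ cutPositions j ℓ).image fun x => (x, x + 1)) ∪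
    {(absSpineLen j ℓ, aJ1 ℓ 1), (absSpineLen j ℓ, bJ2 ℓ 1), (aJ2 ℓ j, bJ2 ℓ j),
      (aJ2 ℓ (j - 1), aJ1 ℓ j), (bJ1 ℓ (j - 1), bJ1 ℓ j)} ∪
    (Finset.Icc 1 (j - 2)).image (fun i => (aJ2 ℓ i, bJ2 ℓ (i + 1))) ∪
    (Finset.Icc 1 (j - 2)).image (fun i => (bJ1 ℓ i, aJ1 ℓ (i + 1)))

lemma mem_augPairs_of_augRel {j ℓ x y : ℕ} (h : augRel j ℓ x y) : (x, y) ∈ augPairs j ℓ := by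
  simp only [augPairs, Finset.mem_union, Finset.mem_image, Finset.mem_sdiff, Finset.mem_range,
    mem_cutPositions, Finset.mem_insert, Finset.mem_singleton, Finset.mem_Icc, Prod.mk.injEq]
  rcases h with ⟨rfl, hy, hcut⟩ | ⟨rfl, rfl | rfl⟩ | ⟨i, hi, hij, ⟨rfl, rfl⟩ | ⟨rfl, rfl⟩⟩ |
    ⟨rfl, rfl⟩ | ⟨rfl, rfl⟩ | ⟨rfl, rfl⟩
  · exact .inl (.inl (.inl ⟨x, ⟨by omega, hcut⟩, rfl, rfl⟩))
  all_goals grind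

lemma card_augPairs_le {j ℓ : ℕ} (hj : 2 ≤ j) : (augPairs j ℓ).card ≤ absSpineLen j ℓ := by
  have hcut : cutPositions j ℓ ⊆ Finset.range (absSpineLen j ℓ - 1) := by
    intro x hx
    obtain ⟨i, hi, hij, rfl | rfl⟩ := mem_cutPositions.1 hx <;>
      have := mul_add_mul_le_of_add_le (2 * ℓ + 4) (show i - 1 + 1 ≤ j by omega) <;>
      simp only [Finset.mem_range, absSpineLen, aJ1, bJ1] <;> omega
  have hspine := Finset.card_sdiff_of_subset hcut
  rw [card_cutPositions, Finset.card_range] at hspine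
  have h2j : 2 * j + 1 ≤ absSpineLen j ℓ := by
    have := Nat.mul_le_mul_left j (show 4 ≤ 2 * ℓ + 4 by omega)
    simp only [absSpineLen]; omega
  calc (augPairs j ℓ).card
      ≤ (absSpineLen j ℓ - 1 - 2 * j) + 5 + (j - 2) + (j - 2) := by
        refine (Finset.card_union_le _ _).trans (add_le_add ((Finset.card_union_le _ _).trans
          (add_le_add ((Finset.card_union_le _ _).trans (add_le_add ?_ Finset.card_le_five))
            ?_)) ?_)
        · exact Finset.card_image_le.trans hspine.le
        all_goals exact Finset.card_image_le.trans (by simp)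
    _ ≤ absSpineLen j ℓ := by omega

lemma ncard_edgeSet_absAugPath_le {j ℓ : ℕ} (hj : 2 ≤ j) :
    (absAugPath j ℓ).edgeSet.ncard ≤ absSpineLen j ℓ :=
  (SimpleGraph.ncard_edgeSet_fromRel_le _ _ fun _ _ => mem_augPairs_of_augRel).trans
    (card_augPairs_le hj)

end RandomGraphs

theorem augmented_path_is_path (j ℓ : ℕ) (hj : 3 ≤ j) :
    ∃ w : (absAugPath j ℓ).Walk
        ⟨0, Nat.succ_pos _⟩ ⟨absSpineLen j ℓ - 1, by omega⟩,
      w.IsPath ∧ w.IsHamiltonian ∧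
      ∀ e, e ∈ (absAugPath j ℓ).edgeSet ↔ e ∈ w.edges := by
  let f t := Fin.ofNat (absSpineLen j ℓ + 1) (augPathSeq j ℓ t)
  have hf : ∀ t ≤ absSpineLen j ℓ, (f t : ℕ) = augPathSeq j ℓ t := fun t ht =>
    Nat.mod_eq_of_lt (Nat.lt_succ_of_le (augPathSeq_le ht))
  have hinj : Set.InjOn f (Set.Iic (absSpineLen j ℓ)) := fun t ht t' ht' h =>
    augPathSeq_injOn j ℓ ht ht' (by rw [← hf t ht, ← hf t' ht', h])
  have hadj : ∀ t < absSpineLen j ℓ, (absAugPath j ℓ).Adj (f t) (f (t + 1)) := fun t ht =>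
    absAugPath_adj_iff.2
      ⟨fun h => by have := hinj (Set.mem_Iic.2 ht.le) (Set.mem_Iic.2 ht) h; omega,
        by rw [hf t ht.le, hf (t + 1) ht]; exact augPathSeq_adj_succ (by omega) ht⟩
  have hfirst : f 0 = ⟨0, Nat.succ_pos _⟩ :=
    Fin.ext (by rw [hf 0 (Nat.zero_le _), augPathSeq_of_le (Nat.zero_le _)])
  have hlast : f (absSpineLen j ℓ) = ⟨absSpineLen j ℓ - 1, by omega⟩ :=
    Fin.ext (by rw [hf _ le_rfl, augPathSeq_last (by omega)])
  have := SimpleGraph.exists_isHamiltonian_of_injOn f (absSpineLen j ℓ) hadj hinj (by simp)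
    (ncard_edgeSet_absAugPath_le (by omega))
  rwa [hfirst, hlast] at this
end

section
/- Let k ≥ 2, j ≥ 3 and ℓ ≥ 2k, and consider the skeleton of the (j,ℓ,k)-absorber with spine P and absorption vertex v. Then the graph consisting of all junction edges, of the path a_{1,1} v b_{1,2}, and of all the edges a_{i,1}a_{i,2} and b_{i,1}b_{i,2} (for all i = 1,…,j) is a cycle. -/
open Filter

open RandomGraphs


namespace RandomGraphs

/-- The graph `D` consisting of all junction edges, of the path `a_{1,1} v b_{1,2}`, and
of all the edges `a_{i,1}a_{i,2}` and `b_{i,1}b_{i,2}` (for all `i = 1,…,j`). -/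
def absJunctionGraph (j ℓ : ℕ) : SimpleGraph (Fin (absSpineLen j ℓ + 1)) :=
  SimpleGraph.fromRel (fun u v =>
    absExtraRel j ℓ u v ∨
    ∃ i, 1 ≤ i ∧ i ≤ j ∧
      (((u : ℕ) = aJ1 ℓ i ∧ (v : ℕ) = aJ2 ℓ i) ∨
       ((u : ℕ) = bJ1 ℓ i ∧ (v : ℕ) = bJ2 ℓ i)))

end RandomGraphs

/-!
Write a junction vertex as a pair `(i, o)`: the vertex at offset `o` of the segment `S_i`, so
`a_{i,1}, a_{i,2}, b_{i,1}, b_{i,2}` are `(i, ℓ), (i, ℓ + 1), (i, 2ℓ + 2), (i, 2ℓ + 3)`, and `v`,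
which is numbered `s`, is `(j + 1, ℓ)`. The junction graph then runs through the cyclic sequence
`v, a_{1,1}, a_{1,2}, b_{2,2}, b_{2,1}, a_{3,1}, a_{3,2}, …`, climbing through segments
`1, …, j - 1` on one strand of pairs, through all four junctions of `S_j`, and back down on the
other strand to `b_{1,2}`; it lists the `4j + 1` vertices once each. Consecutive terms are
adjacent and every edge joins consecutive terms (linear arithmetic in the coordinates), and a
graph whose edges are exactly the consecutive pairs of an injective cyclic sequence is a cycle:
the image of the standard cycle of `cycleGraph`.
-/

namespace SimpleGraph

theorem cycleGraph.mk_mem_edges_cycle {n : ℕ} (t : Fin (n + 3)) :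
    s(t, t + 1) ∈ (cycleGraph.cycle n).edges := by
  have ht := t.isLt
  rw [Walk.mk_mem_edges_iff_exists]
  refine ⟨n + 2 - t, by rw [cycleGraph.length_cycle]; omega, ?_⟩
  rw [cycleGraph.getVert_cycle (by omega), cycleGraph.getVert_cycle (by omega), Sym2.eq_swap]
  congr 1 <;> ext
  · simp only [show n + 3 - (n + 2 - ↑t + 1) = t by omega, Nat.mod_eq_of_lt ht]
  · simp only [Fin.val_add, show n + 3 - (n + 2 - ↑t) = t + 1 by omega]
    simp

theorem exists_isCycle_of_edgeSet_eq_range {V : Type*} {G : SimpleGraph V} {n : ℕ} [NeZero n]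
    (hn : 3 ≤ n) {f : Fin n → V} (hf : Function.Injective f)
    (hG : G.edgeSet = Set.range fun t => s(f t, f (t + 1))) :
    ∃ (v₀ : V) (w : G.Walk v₀ v₀), w.IsCycle ∧ (∀ e, e ∈ G.edgeSet ↔ e ∈ w.edges) ∧
      ∀ x, x ∈ G.support ↔ x ∈ w.support := by
  obtain ⟨m, rfl⟩ : ∃ m, n = m + 3 := ⟨n - 3, by omega⟩
  have hadj (t : Fin (m + 3)) : G.Adj (f t) (f (t + 1)) := by
    rw [← mem_edgeSet, hG]
    exact ⟨t, rfl⟩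
  let φ : cycleGraph (m + 3) →g G :=
    ⟨f, fun {a b} hab => by
      rcases cycleGraph_adj.mp hab with h | h
      · rw [sub_eq_iff_eq_add'.mp h]
        exact (hadj b).symm
      · rw [sub_eq_iff_eq_add'.mp h]
        exact hadj a⟩
  let w := (cycleGraph.cycle m).map φ
  have hedges (e : Sym2 V) : e ∈ G.edgeSet ↔ e ∈ w.edges := by
    refine ⟨?_, fun h => w.edges_subset_edgeSet h⟩
    rw [hG]
    rintro ⟨t, rfl⟩
    rw [Walk.edges_map]
    exact List.mem_map_of_mem (cycleGraph.mk_mem_edges_cycle t)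
  refine ⟨f 0, w, (Walk.isCycle_map_iff_of_injective hf).mpr cycleGraph.isCycle_cycle,
    hedges, fun x => ⟨fun ⟨y, hxy⟩ => w.fst_mem_support_of_mem_edges ((hedges _).mp hxy), ?_⟩⟩
  rw [Walk.support_map]
  intro hx
  obtain ⟨t, -, rfl⟩ := List.mem_map.mp hx
  exact ⟨f (t + 1), hadj t⟩

end SimpleGraph

namespace RandomGraphs

def spinePos (ℓ i o : ℕ) : ℕ := (i - 1) * (2 * ℓ + 4) + o

theorem aJ1_eq_spinePos (ℓ i : ℕ) : aJ1 ℓ i = spinePos ℓ i ℓ := rfl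

theorem aJ2_eq_spinePos (ℓ i : ℕ) : aJ2 ℓ i = spinePos ℓ i (ℓ + 1) := rfl

theorem bJ1_eq_spinePos (ℓ i : ℕ) : bJ1 ℓ i = spinePos ℓ i (2 * ℓ + 2) := by
  simp only [bJ1, spinePos]
  omega

theorem bJ2_eq_spinePos (ℓ i : ℕ) : bJ2 ℓ i = spinePos ℓ i (2 * ℓ + 3) := by
  simp only [bJ2, spinePos]
  omega

theorem absSpineLen_eq_spinePos (j ℓ : ℕ) : absSpineLen j ℓ = spinePos ℓ (j + 1) ℓ := by
  simp [absSpineLen, spinePos]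

theorem spinePos_lt_spinePos {ℓ i i' o o' : ℕ} (hi : 1 ≤ i) (hii' : i < i')
    (ho : o < 2 * ℓ + 4) : spinePos ℓ i o < spinePos ℓ i' o' := by
  have := Nat.mul_le_mul_right (2 * ℓ + 4) (show i - 1 + 1 ≤ i' - 1 by omega)
  rw [add_one_mul] at this
  unfold spinePos
  omega

theorem spinePos_inj {ℓ i i' o o' : ℕ} (hi : 1 ≤ i) (hi' : 1 ≤ i') (ho : o < 2 * ℓ + 4)
    (ho' : o' < 2 * ℓ + 4) : spinePos ℓ i o = spinePos ℓ i' o' ↔ i = i' ∧ o = o' := by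
  refine ⟨fun h => ?_, by rintro ⟨rfl, rfl⟩; rfl⟩
  rcases lt_trichotomy i i' with hlt | rfl | hgt
  · exact absurd h (spinePos_lt_spinePos hi hlt ho).ne
  · exact ⟨rfl, Nat.add_left_cancel h⟩
  · exact absurd h (spinePos_lt_spinePos hi' hgt ho').ne'

/-- `absExtraRel` together with the pairs `a_{i,1}a_{i,2}` and `b_{i,1}b_{i,2}`, in the
coordinates `(i, o) ↦ spinePos ℓ i o`. -/
def absJunctionCoordRel (j ℓ i o i' o' : ℕ) : Prop :=
  (i = j + 1 ∧ o = ℓ ∧ i' = 1 ∧ (o' = ℓ ∨ o' = 2 * ℓ + 3)) ∨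
  (1 ≤ i ∧ i ≤ j - 2 ∧ i' = i + 1 ∧ (o = ℓ + 1 ∧ o' = 2 * ℓ + 3 ∨ o = 2 * ℓ + 2 ∧ o' = ℓ)) ∨
  (i = j ∧ i' = j ∧ o = ℓ + 1 ∧ o' = 2 * ℓ + 3) ∨
  (i = j - 1 ∧ i' = j ∧ (o = ℓ + 1 ∧ o' = ℓ ∨ o = 2 * ℓ + 2 ∧ o' = 2 * ℓ + 2)) ∨
  (1 ≤ i ∧ i ≤ j ∧ i' = i ∧ (o = ℓ ∧ o' = ℓ + 1 ∨ o = 2 * ℓ + 2 ∧ o' = 2 * ℓ + 3))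

def absJunctionPosRel (j ℓ x y : ℕ) : Prop :=
  ∃ i o i' o', absJunctionCoordRel j ℓ i o i' o' ∧ x = spinePos ℓ i o ∧ y = spinePos ℓ i' o'

theorem absJunctionGraph_adj_iff {j ℓ : ℕ} {u v : Fin (absSpineLen j ℓ + 1)} :
    (absJunctionGraph j ℓ).Adj u v ↔
      u ≠ v ∧ (absJunctionPosRel j ℓ u v ∨ absJunctionPosRel j ℓ v u) := by
  have key (x y : ℕ) : (absExtraRel j ℓ x y ∨
      ∃ i, 1 ≤ i ∧ i ≤ j ∧ (x = aJ1 ℓ i ∧ y = aJ2 ℓ i ∨ x = bJ1 ℓ i ∧ y = bJ2 ℓ i)) ↔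
      absJunctionPosRel j ℓ x y := by
    simp only [absJunctionPosRel, absExtraRel, absJunctionCoordRel, aJ1_eq_spinePos,
      aJ2_eq_spinePos, bJ1_eq_spinePos, bJ2_eq_spinePos, absSpineLen_eq_spinePos]
    constructor
    · rintro ((⟨rfl, rfl | rfl⟩ | ⟨i, h1, h2, ⟨rfl, rfl⟩ | ⟨rfl, rfl⟩⟩ | ⟨rfl, rfl⟩ | ⟨rfl, rfl⟩ |
        ⟨rfl, rfl⟩) | ⟨i, h1, h2, ⟨rfl, rfl⟩ | ⟨rfl, rfl⟩⟩)
      · exact ⟨_, _, _, _, .inl ⟨rfl, rfl, rfl, .inl rfl⟩, rfl, rfl⟩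
      · exact ⟨_, _, _, _, .inl ⟨rfl, rfl, rfl, .inr rfl⟩, rfl, rfl⟩
      · exact ⟨_, _, _, _, .inr (.inl ⟨h1, h2, rfl, .inl ⟨rfl, rfl⟩⟩), rfl, rfl⟩
      · exact ⟨_, _, _, _, .inr (.inl ⟨h1, h2, rfl, .inr ⟨rfl, rfl⟩⟩), rfl, rfl⟩
      · exact ⟨_, _, _, _, .inr (.inr (.inl ⟨rfl, rfl, rfl, rfl⟩)), rfl, rfl⟩
      · exact ⟨_, _, _, _, .inr (.inr (.inr (.inl ⟨rfl, rfl, .inl ⟨rfl, rfl⟩⟩))), rfl, rfl⟩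
      · exact ⟨_, _, _, _, .inr (.inr (.inr (.inl ⟨rfl, rfl, .inr ⟨rfl, rfl⟩⟩))), rfl, rfl⟩
      · exact ⟨_, _, _, _, .inr (.inr (.inr (.inr ⟨h1, h2, rfl, .inl ⟨rfl, rfl⟩⟩))), rfl, rfl⟩
      · exact ⟨_, _, _, _, .inr (.inr (.inr (.inr ⟨h1, h2, rfl, .inr ⟨rfl, rfl⟩⟩))), rfl, rfl⟩
    · rintro ⟨i, o, i', o', h, rfl, rfl⟩
      aesop
  rw [absJunctionGraph, SimpleGraph.fromRel_adj, key, key]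

/-- Segment of the `t`-th vertex of the cycle (`0 ≤ t ≤ 4j`): `v` at `t = 0`, segment `i < j`
at the ascending positions `2i - 1, 2i` and the descending ones `4j + 1 - 2i, 4j + 2 - 2i`,
segment `j` at `2j - 1, …, 2j + 2`. -/
def absCycleSeg (j t : ℕ) : ℕ :=
  if t = 0 ∨ 4 * j + 1 ≤ t then j + 1
  else if t ≤ 2 * j - 2 then (t + 1) / 2
  else if t ≤ 2 * j + 2 then j
  else (4 * j + 2 - t) / 2

/-- Offset of the `t`-th vertex of the cycle: segment `i < j` is climbed along `a_{i,1}a_{i,2}`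
if `i` is odd and along `b_{i,2}b_{i,1}` if `i` is even, and descended along the other pair. -/
def absCycleOffset (j ℓ t : ℕ) : ℕ :=
  if t = 0 ∨ 4 * j + 1 ≤ t then ℓ
  else if t ≤ 2 * j - 2 then
    if (t + 1) / 2 % 2 = 1 then ℓ + (t + 1) % 2 else 2 * ℓ + 3 - (t + 1) % 2
  else if t ≤ 2 * j + 2 then
    if j % 2 = 0 then
      if t ≤ 2 * j then ℓ + (t + 1) % 2 else 2 * ℓ + 3 - (t + 1) % 2
    else
      if t ≤ 2 * j then 2 * ℓ + 2 + (t + 1) % 2 else ℓ + 1 - (t + 1) % 2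
  else if (4 * j + 2 - t) / 2 % 2 = 1 then 2 * ℓ + 2 + (t + 1) % 2 else ℓ + 1 - (t + 1) % 2

def absCycleVertex (j ℓ t : ℕ) : ℕ := spinePos ℓ (absCycleSeg j t) (absCycleOffset j ℓ t)

theorem absCycle_coord_bounds (j ℓ t : ℕ) :
    1 ≤ absCycleSeg j t ∧ absCycleOffset j ℓ t < 2 * ℓ + 4 ∧
      (absCycleSeg j t ≤ j ∨ absCycleSeg j t = j + 1 ∧ absCycleOffset j ℓ t = ℓ) := by
  unfold absCycleSeg absCycleOffset
  split_ifs <;> omega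

theorem absCycleVertex_le (j ℓ t : ℕ) : absCycleVertex j ℓ t ≤ absSpineLen j ℓ := by
  obtain ⟨h1, ho, hseg | ⟨hseg, hoff⟩⟩ := absCycle_coord_bounds j ℓ t
  · exact (spinePos_lt_spinePos h1 (Nat.lt_succ_of_le hseg) ho).le
  · rw [absCycleVertex, hseg, hoff, absSpineLen_eq_spinePos]

theorem absCycleVertex_four_mul_add_one (j ℓ : ℕ) :
    absCycleVertex j ℓ (4 * j + 1) = absCycleVertex j ℓ 0 := by
  simp [absCycleVertex, absCycleSeg, absCycleOffset]

theorem absCycle_coord_inj {j ℓ t t' : ℕ} (ht : t < 4 * j + 1) (ht' : t' < 4 * j + 1)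
    (hseg : absCycleSeg j t = absCycleSeg j t')
    (hoff : absCycleOffset j ℓ t = absCycleOffset j ℓ t') : t = t' := by
  unfold absCycleSeg at hseg
  unfold absCycleOffset at hoff
  split_ifs at hseg hoff <;> omega

theorem absCycleVertex_injOn (j ℓ : ℕ) :
    Set.InjOn (absCycleVertex j ℓ) (Set.Iio (4 * j + 1)) := by
  intro t ht t' ht' h
  obtain ⟨h1, ho, -⟩ := absCycle_coord_bounds j ℓ t
  obtain ⟨h1', ho', -⟩ := absCycle_coord_bounds j ℓ t'
  obtain ⟨hseg, hoff⟩ := (spinePos_inj h1 h1' ho ho').mp h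
  exact absCycle_coord_inj ht ht' hseg hoff

theorem absCycle_coordRel_succ {j ℓ t : ℕ} (hj : 2 ≤ j) (ht : t < 4 * j + 1) :
    absJunctionCoordRel j ℓ (absCycleSeg j t) (absCycleOffset j ℓ t)
        (absCycleSeg j (t + 1)) (absCycleOffset j ℓ (t + 1)) ∨
      absJunctionCoordRel j ℓ (absCycleSeg j (t + 1)) (absCycleOffset j ℓ (t + 1))
        (absCycleSeg j t) (absCycleOffset j ℓ t) := by
  simp only [absJunctionCoordRel, or_assoc]
  -- `omega` blows up on the whole disjunction, so it is offered the disjuncts one at a time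
  rcases (show t = 0 ∨ (1 ≤ t ∧ t + 1 ≤ 2 * j - 2) ∨ t = 2 * j - 2 ∨
      (2 * j - 1 ≤ t ∧ t ≤ 2 * j + 1) ∨ t = 2 * j + 2 ∨ (2 * j + 3 ≤ t ∧ t < 4 * j) ∨ t = 4 * j
      by omega) with h | h | h | h | h | h | h <;>
  simp (disch := omega) only [absCycleSeg, absCycleOffset, if_pos, if_neg, true_or, true_and] <;>
  (try split_ifs) <;>
  repeat (first | (left; omega) | right)
  all_goals omega

set_option maxHeartbeats 400000 in
theorem exists_absCycle_of_coordRel {j ℓ i o i' o' : ℕ} (hj : 2 ≤ j)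
    (h : absJunctionCoordRel j ℓ i o i' o') :
    ∃ t < 4 * j + 1,
      (absCycleSeg j t = i ∧ absCycleOffset j ℓ t = o ∧
        absCycleSeg j (t + 1) = i' ∧ absCycleOffset j ℓ (t + 1) = o') ∨
      (absCycleSeg j t = i' ∧ absCycleOffset j ℓ t = o' ∧
        absCycleSeg j (t + 1) = i ∧ absCycleOffset j ℓ (t + 1) = o) := by
  rcases h with ⟨hi, ho, hi', ho' | ho'⟩ | ⟨h1, h2, hi', ⟨ho, ho'⟩ | ⟨ho, ho'⟩⟩ |
    ⟨hi, hi', ho, ho'⟩ | ⟨hi, hi', ⟨ho, ho'⟩ | ⟨ho, ho'⟩⟩ | ⟨h1, h2, hi', ⟨ho, ho'⟩ | ⟨ho, ho'⟩⟩ <;>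
  [exists 0; exists 4 * j;
    exists if i % 2 = 1 then 2 * i else 4 * j - 2 * i;
    exists if i % 2 = 1 then 4 * j - 2 * i else 2 * i;
    exists 2 * j;
    exists if j % 2 = 0 then 2 * j - 2 else 2 * j + 2;
    exists if j % 2 = 0 then 2 * j + 2 else 2 * j - 2;
    exists if i % 2 = 1 ↔ i < j then 2 * i - 1 else 4 * j + 1 - 2 * i;
    exists if i % 2 = 1 ↔ i < j then 4 * j + 1 - 2 * i else 2 * i - 1] <;>
  (try split_ifs) <;>
  refine ⟨by omega, ?_⟩ <;>
  simp (disch := omega) only [absCycleSeg, absCycleOffset, if_pos, if_neg, true_or, ↓reduceIte] <;>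
  (try split_ifs) <;>
  omega

def absCycle (j ℓ : ℕ) (t : Fin (4 * j + 1)) : Fin (absSpineLen j ℓ + 1) :=
  ⟨absCycleVertex j ℓ t, Nat.lt_succ_of_le (absCycleVertex_le j ℓ t)⟩

theorem absCycle_injective (j ℓ : ℕ) : Function.Injective (absCycle j ℓ) :=
  fun t t' h => Fin.ext (absCycleVertex_injOn j ℓ t.isLt t'.isLt (congrArg Fin.val h))

theorem val_absCycle_add_one {j ℓ : ℕ} (t : Fin (4 * j + 1)) :
    (absCycle j ℓ (t + 1) : ℕ) = absCycleVertex j ℓ (t + 1) := by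
  change absCycleVertex j ℓ ↑(t + 1) = _
  rw [Fin.val_add_one]
  split_ifs with h
  · rw [h, Fin.val_last, absCycleVertex_four_mul_add_one]
  · rfl

theorem absJunctionGraph_adj_absCycle {j ℓ : ℕ} (hj : 2 ≤ j) (t : Fin (4 * j + 1)) :
    (absJunctionGraph j ℓ).Adj (absCycle j ℓ t) (absCycle j ℓ (t + 1)) := by
  have ht : t ≠ t + 1 := by
    rw [Ne, Fin.ext_iff, Fin.val_add_one]
    split_ifs with hlast
    · rw [hlast, Fin.val_last]
      omega
    · omega
  refine absJunctionGraph_adj_iff.mpr ⟨(absCycle_injective j ℓ).ne ht, ?_⟩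
  exact (absCycle_coordRel_succ hj t.isLt).imp
    (fun h => ⟨_, _, _, _, h, rfl, val_absCycle_add_one t⟩)
    (fun h => ⟨_, _, _, _, h, val_absCycle_add_one t, rfl⟩)

theorem exists_absCycle_of_posRel {j ℓ : ℕ} (hj : 2 ≤ j) {u v : Fin (absSpineLen j ℓ + 1)}
    (h : absJunctionPosRel j ℓ u v) :
    ∃ t, s(absCycle j ℓ t, absCycle j ℓ (t + 1)) = s(u, v) := by
  obtain ⟨i, o, i', o', hL, hu, hv⟩ := h
  obtain ⟨t, ht, ⟨h1, h2, h3, h4⟩ | ⟨h1, h2, h3, h4⟩⟩ := exists_absCycle_of_coordRel hj hL <;>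
    refine ⟨⟨t, ht⟩, Sym2.map.injective Fin.val_injective ?_⟩ <;>
    simp only [Sym2.map_mk, val_absCycle_add_one] <;>
    simp only [absCycle, absCycleVertex, hu, hv, h1, h2, h3, h4, Sym2.eq_swap]

theorem absJunctionGraph_edgeSet {j ℓ : ℕ} (hj : 2 ≤ j) :
    (absJunctionGraph j ℓ).edgeSet =
      Set.range fun t => s(absCycle j ℓ t, absCycle j ℓ (t + 1)) := by
  ext e
  refine Sym2.ind (fun u v => ?_) e
  rw [SimpleGraph.mem_edgeSet]
  constructor
  · intro hadj
    obtain ⟨-, h | h⟩ := absJunctionGraph_adj_iff.mp hadj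
    · exact exists_absCycle_of_posRel hj h
    · obtain ⟨t, ht⟩ := exists_absCycle_of_posRel hj h
      exact ⟨t, ht.trans Sym2.eq_swap⟩
  · rintro ⟨t, ht⟩
    obtain ⟨rfl, rfl⟩ | ⟨rfl, rfl⟩ := Sym2.eq_iff.mp ht
    · exact absJunctionGraph_adj_absCycle hj t
    · exact (absJunctionGraph_adj_absCycle hj t).symm

end RandomGraphs

theorem junction_graph_is_cycle_general (j ℓ : ℕ) (hj : 3 ≤ j) :
    ∃ (v₀ : Fin (absSpineLen j ℓ + 1)) (w : (absJunctionGraph j ℓ).Walk v₀ v₀),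
      w.IsCycle ∧
      (∀ e, e ∈ (absJunctionGraph j ℓ).edgeSet ↔ e ∈ w.edges) ∧
      (∀ x, x ∈ (absJunctionGraph j ℓ).support ↔ x ∈ w.support) :=
  SimpleGraph.exists_isCycle_of_edgeSet_eq_range (by omega) (absCycle_injective j ℓ)
    (absJunctionGraph_edgeSet (by omega))

/-- Let `k ≥ 2`, `j ≥ 3` and `ℓ ≥ 2k`. The graph consisting of all
junction edges, of the path `a_{1,1} v b_{1,2}`, and of all the edges `a_{i,1}a_{i,2}`
and `b_{i,1}b_{i,2}` (for all `i = 1,…,j`) is a cycle.  Formally: there is a cycle `w`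
in `absJunctionGraph j ℓ` whose edges are exactly the edges of `absJunctionGraph j ℓ`
and whose support is exactly the set of non-isolated vertices of `absJunctionGraph j ℓ`. -/
theorem junction_graph_is_cycle (k j ℓ : ℕ) (hk : 2 ≤ k) (hj : 3 ≤ j) (hℓ : 2 * k ≤ ℓ) :
    ∃ (v₀ : Fin (absSpineLen j ℓ + 1)) (w : (absJunctionGraph j ℓ).Walk v₀ v₀),
      w.IsCycle ∧
      (∀ e, e ∈ (absJunctionGraph j ℓ).edgeSet ↔ e ∈ w.edges) ∧
      (∀ x, x ∈ (absJunctionGraph j ℓ).support ↔ x ∈ w.support) :=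
  junction_graph_is_cycle_general j ℓ hj
end
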